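/- arXiv:1608.06953 — 4 statements merged into one kernel-verified Lean document; each statement's English description precedes it below -/
import Mathlib

section
/- Let X be a real random variable that has either nonzero mean or infinite second moment, let ε ∈ (0,1), and for each n let A_n be an n × n random matrix whose entries are i.i.d. copies of X. For each n define m_n as the minimum of ‖Ã_n‖/√n over all matrices Ã_n obtained from A_n by arbitrarily modifying the entries in any ⌊εn⌋ × ⌊εn⌋ submatrix (i.e., Ã_n agrees with A_n outside some product set I × J with |I|, |J| ≤ εn). Then m_n → ∞ as n → ∞ almost surely. -/
open MeasureTheory ProbabilityTheory
open scoped ENNReal NNReal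

/-- The `ℓ₂ → ℓ₂` operator norm of a real matrix. -/
noncomputable def l2OpNorm {m k : Type*} [Fintype m] [Fintype k] [DecidableEq k]
    (A : Matrix m k ℝ) : ℝ :=
  ‖LinearMap.toContinuousLinearMap (Matrix.toEuclideanLin (𝕜 := ℝ) A)‖

/-!
A block modification `B` of `A n` still agrees with `A n` on a block `S × T` with
`#S, #T ≥ (1 - ε) n`; we show that almost surely, for all large `n`, every such block forces
`‖B‖ ≥ C √n`.

* If `E X² = ∞`, the truncation `min (X², M)` has arbitrarily large mean. Hoeffding's inequality
  and a union bound over the `4ⁿ` blocks show that every large block carries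
  `∑ min (A², M) ≥ C² n²`. Each column of `B` has Euclidean norm at most `‖B‖`, so
  `n ‖B‖² ≥ C² n²`.
* If `E X² < ∞` and `E X > 0` (the sign is removed by `B ↦ -B`), clamp `X` to `[-M, M]`.
  Hoeffding bounds every block sum of the clamped entries below by about `(1 - ε)² E X · n²`, and
  Chebyshev bounds the total clamping error `∑ |A - clamp A|` by a small multiple of `n²`.
  Testing `B` against the indicator vectors of `S` and `T` gives `∑_{S × T} B ≤ n ‖B‖`, so
  `‖B‖ ≥ c n`.

The failure probabilities, `4ⁿ e^{-c n²}` and `O(1 / n²)`, are summable, so Borel–Cantelli makes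
both bounds almost sure.
-/

open Finset Filter Real Topology

section OpNorm

variable {m k : Type*} [Fintype m] [Fintype k] [DecidableEq k]

lemma norm_toEuclideanLin_le (B : Matrix m k ℝ) (x : EuclideanSpace ℝ k) :
    ‖Matrix.toEuclideanLin B x‖ ≤ l2OpNorm B * ‖x‖ :=
  (LinearMap.toContinuousLinearMap (Matrix.toEuclideanLin B)).le_opNorm x

lemma l2OpNorm_neg (B : Matrix m k ℝ) : l2OpNorm (-B) = l2OpNorm B := by
  rw [l2OpNorm, l2OpNorm, map_neg, map_neg, norm_neg]

lemma sum_sq_apply_le_l2OpNorm_sq (B : Matrix m k ℝ) (j : k) :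
    ∑ i, B i j ^ 2 ≤ l2OpNorm B ^ 2 := by
  have h := norm_toEuclideanLin_le B (EuclideanSpace.single j 1)
  rw [PiLp.norm_single, norm_one, mul_one] at h
  have hcol : Matrix.toEuclideanLin B (EuclideanSpace.single j 1) =
      WithLp.toLp 2 (fun i => B i j) := by
    ext i; simp [Matrix.toLpLin_apply, Matrix.mulVec_single]
  rw [hcol] at h
  have := pow_le_pow_left₀ (norm_nonneg _) h 2
  simpa [EuclideanSpace.real_norm_sq_eq] using this

lemma sum_sq_le_card_mul_l2OpNorm_sq (B : Matrix m k ℝ) (S : Finset m) (T : Finset k) :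
    ∑ p ∈ S ×ˢ T, B p.1 p.2 ^ 2 ≤ #T * l2OpNorm B ^ 2 := by
  rw [sum_product_right]
  calc ∑ j ∈ T, ∑ i ∈ S, B i j ^ 2 ≤ ∑ j ∈ T, l2OpNorm B ^ 2 := by
        gcongr with j
        exact (sum_le_univ_sum_of_nonneg fun i => sq_nonneg _).trans
          (sum_sq_apply_le_l2OpNorm_sq B j)
    _ = #T * l2OpNorm B ^ 2 := by rw [sum_const, nsmul_eq_mul]

lemma norm_toLp_indicator_eq_sqrt_card {ι : Type*} [Fintype ι] [DecidableEq ι] (s : Finset ι) :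
    ‖(WithLp.toLp 2 (fun i => if i ∈ s then (1 : ℝ) else 0) : EuclideanSpace ℝ ι)‖ = √(#s : ℝ) := by
  rw [EuclideanSpace.norm_eq]
  congr 1
  simp [apply_ite]

lemma sum_le_l2OpNorm_mul_sqrt (B : Matrix m k ℝ) (S : Finset m) (T : Finset k) :
    ∑ p ∈ S ×ˢ T, B p.1 p.2 ≤ l2OpNorm B * √(#S * #T) := by
  classical
  set u : EuclideanSpace ℝ m := WithLp.toLp 2 (fun i => if i ∈ S then 1 else 0)
  set v : EuclideanSpace ℝ k := WithLp.toLp 2 (fun j => if j ∈ T then 1 else 0)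
  have hinner : inner ℝ u (Matrix.toEuclideanLin B v) = ∑ p ∈ S ×ˢ T, B p.1 p.2 := by
    simp [u, v, EuclideanSpace.inner_toLp_toLp, Matrix.toLpLin_toLp, dotProduct, Matrix.mulVec,
      sum_product, sum_ite_mem]
  calc ∑ p ∈ S ×ˢ T, B p.1 p.2 = inner ℝ u (Matrix.toEuclideanLin B v) := hinner.symm
    _ ≤ ‖u‖ * ‖Matrix.toEuclideanLin B v‖ := real_inner_le_norm _ _
    _ ≤ ‖u‖ * (l2OpNorm B * ‖v‖) := by gcongr; exact norm_toEuclideanLin_le B v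
    _ = l2OpNorm B * √(#S * #T) := by
      rw [norm_toLp_indicator_eq_sqrt_card, norm_toLp_indicator_eq_sqrt_card,
        sqrt_mul (Nat.cast_nonneg _)]
      ring

end OpNorm

def IsBlockModification {n : ℕ} (ε : ℝ) (A B : Matrix (Fin n) (Fin n) ℝ) : Prop :=
  ∃ I J : Finset (Fin n), (#I : ℝ) ≤ ε * n ∧ (#J : ℝ) ≤ ε * n ∧
    ∀ i j, (i ∉ I ∨ j ∉ J) → B i j = A i j

namespace IsBlockModification

variable {n : ℕ} {ε : ℝ} {A B : Matrix (Fin n) (Fin n) ℝ}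

lemma refl (hε : 0 ≤ ε) (A : Matrix (Fin n) (Fin n) ℝ) : IsBlockModification ε A A :=
  ⟨∅, ∅, by simpa using mul_nonneg hε n.cast_nonneg, by simpa using mul_nonneg hε n.cast_nonneg,
    fun _ _ _ => rfl⟩

lemma neg (h : IsBlockModification ε A B) : IsBlockModification ε (-A) (-B) :=
  let ⟨I, J, hI, hJ, hB⟩ := h
  ⟨I, J, hI, hJ, fun i j hij => by simp [hB i j hij]⟩

lemma exists_large_block_eq (hε : ε ≤ 1) (h : IsBlockModification ε A B) :
    ∃ S T : Finset (Fin n), (1 - ε) ^ 2 * n ^ 2 ≤ #S * #T ∧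
      ∀ p ∈ S ×ˢ T, B p.1 p.2 = A p.1 p.2 := by
  obtain ⟨I, J, hI, hJ, hB⟩ := h
  have hcompl : ∀ K : Finset (Fin n), (#K : ℝ) ≤ ε * n → (1 - ε) * n ≤ #Kᶜ := by
    intro K hK
    rw [card_compl, Fintype.card_fin, Nat.cast_sub (by simpa using card_le_univ K)]
    linarith
  refine ⟨Iᶜ, Jᶜ, ?_, fun p hp => hB _ _ (Or.inl (mem_compl.1 (mem_product.1 hp).1))⟩
  have : 0 ≤ (1 - ε) * n := mul_nonneg (by linarith) n.cast_nonneg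
  calc (1 - ε) ^ 2 * n ^ 2 = ((1 - ε) * n) * ((1 - ε) * n) := by ring
    _ ≤ #Iᶜ * #Jᶜ := by gcongr <;> exact hcompl _ ‹_›

end IsBlockModification

section BlockSums

variable {n : ℕ}

lemma card_mul_card_le_sq (S T : Finset (Fin n)) : (#S : ℝ) * #T ≤ n ^ 2 := by
  have hS := card_le_univ S
  have hT := card_le_univ T
  rw [Fintype.card_fin] at hS hT
  rw [sq]
  gcongr

lemma mul_le_l2OpNorm_of_mul_sq_le_sum {B : Matrix (Fin n) (Fin n) ℝ} {S T : Finset (Fin n)}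
    {c : ℝ} (hn : 0 < n) (h : c * n ^ 2 ≤ ∑ p ∈ S ×ˢ T, B p.1 p.2) : c * n ≤ l2OpNorm B := by
  have : c * n * n ≤ l2OpNorm B * n := calc
    c * n * n = c * n ^ 2 := by ring
    _ ≤ l2OpNorm B * √(#S * #T) := h.trans (sum_le_l2OpNorm_mul_sqrt B S T)
    _ ≤ l2OpNorm B * n := by
        gcongr
        · exact norm_nonneg _
        · exact (sqrt_le_sqrt (card_mul_card_le_sq S T)).trans_eq (sqrt_sq n.cast_nonneg)
  exact le_of_mul_le_mul_right this (by exact_mod_cast hn)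

lemma mul_sqrt_le_l2OpNorm_of_sq_mul_sq_le_sum_sq {B : Matrix (Fin n) (Fin n) ℝ}
    {S T : Finset (Fin n)} {C : ℝ} (hn : 0 < n)
    (h : C ^ 2 * n ^ 2 ≤ ∑ p ∈ S ×ˢ T, B p.1 p.2 ^ 2) : C * √n ≤ l2OpNorm B := by
  have hn' : (0 : ℝ) < n := by exact_mod_cast hn
  have hT : (#T : ℝ) ≤ n := by exact_mod_cast (card_le_univ T).trans_eq (Fintype.card_fin n)
  have h' : C ^ 2 * n * n ≤ l2OpNorm B ^ 2 * n := calc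
    C ^ 2 * n * n = C ^ 2 * n ^ 2 := by ring
    _ ≤ #T * l2OpNorm B ^ 2 := h.trans (sum_sq_le_card_mul_l2OpNorm_sq B S T)
    _ ≤ l2OpNorm B ^ 2 * n := by rw [mul_comm]; gcongr
  have : (C * √n) ^ 2 ≤ l2OpNorm B ^ 2 := by
    rw [mul_pow, sq_sqrt hn'.le]; exact le_of_mul_le_mul_right h' hn'
  exact (le_abs_self _).trans (abs_le_of_sq_le_sq this (norm_nonneg _))

lemma sum_sub_sum_abs_sub_le_sum {A B : Matrix (Fin n) (Fin n) ℝ} {S T : Finset (Fin n)}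
    (hBA : ∀ p ∈ S ×ˢ T, B p.1 p.2 = A p.1 p.2) (g : ℝ → ℝ) :
    ∑ p ∈ S ×ˢ T, g (A p.1 p.2) - ∑ p : Fin n × Fin n, |A p.1 p.2 - g (A p.1 p.2)|
      ≤ ∑ p ∈ S ×ˢ T, B p.1 p.2 := calc
  _ ≤ ∑ p ∈ S ×ˢ T, g (A p.1 p.2) - ∑ p ∈ S ×ˢ T, |A p.1 p.2 - g (A p.1 p.2)| := by
      gcongr
      exact subset_univ _
  _ ≤ ∑ p ∈ S ×ˢ T, B p.1 p.2 := by
      rw [← sum_sub_distrib]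
      gcongr with p hp
      rw [hBA p hp]
      linarith [neg_abs_le (A p.1 p.2 - g (A p.1 p.2))]

end BlockSums

lemma tendsto_iInf_atTop_of_forall_eventually {ι : ℕ → Type*} (hι : ∀ n, Nonempty (ι n))
    {f : ∀ n, ι n → ℝ} (h : ∀ k : ℕ, ∀ᶠ n in atTop, ∀ i, (k : ℝ) ≤ f n i) :
    Tendsto (fun n => ⨅ i, f n i) atTop atTop :=
  tendsto_atTop.2 fun b => (h ⌈b⌉₊).mono fun n hn =>
    haveI := hι n
    (Nat.le_ceil b).trans (le_ciInf hn)

lemma eventually_mul_sqrt_le_mul {c : ℝ} (hc : 0 < c) (C : ℝ) :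
    ∀ᶠ n : ℕ in atTop, C * √n ≤ c * n := by
  filter_upwards [eventually_ge_atTop ⌈(C / c) ^ 2⌉₊] with n hn
  have : C / c ≤ √n :=
    (le_abs_self _).trans (abs_le_sqrt ((Nat.le_ceil _).trans (by exact_mod_cast hn)))
  calc C * √n ≤ c * √n * √n := by gcongr; rwa [← div_le_iff₀' hc]
    _ = c * n := by rw [mul_assoc, mul_self_sqrt n.cast_nonneg]

lemma summable_pow_mul_exp_neg_mul_sq (a : ℝ) {c : ℝ} (hc : 0 < c) :
    Summable fun n : ℕ => a ^ n * exp (-(c * n ^ 2)) := by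
  refine summable_exp_neg_nat.of_norm_bounded_eventually_nat ?_
  filter_upwards [eventually_ge_atTop ⌈(|a| + 1) / c⌉₊] with n hn
  have hn' : |a| + 1 ≤ c * n := by
    rw [← div_le_iff₀' hc]; exact (Nat.le_ceil _).trans (by exact_mod_cast hn)
  calc ‖a ^ n * exp (-(c * n ^ 2))‖ = |a| ^ n * exp (-(c * n ^ 2)) := by
        rw [norm_mul, norm_pow, Real.norm_eq_abs, Real.norm_of_nonneg (exp_nonneg _)]
    _ ≤ exp |a| ^ n * exp (-(c * n ^ 2)) := by
        gcongr; linarith [add_one_le_exp |a|]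
    _ = exp (n * (|a| - c * n)) := by rw [← exp_nat_mul, ← exp_add]; ring_nf
    _ ≤ exp (-n) := by gcongr; nlinarith [(Nat.cast_nonneg n : (0:ℝ) ≤ n)]

lemma ae_eventually_notMem_of_measureReal_le {α : Type*} [MeasurableSpace α] {μ : Measure α}
    [IsFiniteMeasure μ] {s : ℕ → Set α} {f : ℕ → ℝ} (hf : Summable f)
    (hs : ∀ᶠ n in atTop, μ.real (s n) ≤ f n) : ∀ᵐ x ∂μ, ∀ᶠ n in atTop, x ∉ s n := by
  have hsum : Summable fun n => μ.real (s n) :=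
    hf.of_norm_bounded_eventually_nat (by
      filter_upwards [hs] with n hn; rwa [Real.norm_of_nonneg measureReal_nonneg])
  refine ae_eventually_notMem ?_
  rw [tsum_congr fun n => (ofReal_measureReal (measure_ne_top μ (s n))).symm,
    ← ENNReal.ofReal_tsum_of_nonneg (fun _ => measureReal_nonneg) hsum]
  exact ENNReal.ofReal_ne_top

section Concentration

variable {Ω Ω' : Type*} [MeasurableSpace Ω] [MeasurableSpace Ω'] {μ : Measure Ω} {ν : Measure Ω'}
  [IsProbabilityMeasure μ]

lemma measureReal_sum_le_sum_integral_sub_le {ι : Type*} {Y : ι → Ω → ℝ}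
    (hind : iIndepFun Y μ) (hY : ∀ i, Measurable (Y i)) {K : ℝ} (hK : ∀ i ω, |Y i ω| ≤ K)
    (s : Finset ι) {t : ℝ} (ht : 0 ≤ t) :
    μ.real {ω | ∑ i ∈ s, Y i ω ≤ ∑ i ∈ s, μ[Y i] - t} ≤ exp (-t ^ 2 / (2 * #s * K ^ 2)) := by
  have hsub : ∀ i, HasSubgaussianMGF (fun ω => -(Y i ω - μ[Y i])) ((‖K - -K‖₊ / 2) ^ 2) μ :=
    fun i => (hasSubgaussianMGF_of_mem_Icc (hY i).aemeasurable
      (ae_of_all _ fun ω => abs_le.1 (hK i ω))).neg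
  have hind' : iIndepFun (fun i ω => -(Y i ω - μ[Y i])) μ :=
    hind.comp (fun i (x : ℝ) => -(x - ∫ ω, Y i ω ∂μ)) fun _ => (measurable_id.sub_const _).neg
  have h := HasSubgaussianMGF.measure_sum_ge_le_of_iIndepFun hind' (s := s) (fun i _ => hsub i) ht
  have hc : ((∑ i ∈ s, (‖K - -K‖₊ / 2) ^ 2 : ℝ≥0) : ℝ) = #s * K ^ 2 := by
    simp [← two_mul]
  convert h using 3
  · ext ω
    simp only [sum_neg_distrib, sum_sub_distrib]
    constructor <;> intro h <;> linarith
  · rw [hc]; ring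

lemma measureReal_abs_sum_sub_ge_le {ι : Type*} [Fintype ι] [Nonempty ι] {Y : ι → Ω → ℝ}
    {Z : Ω' → ℝ} (hind : iIndepFun Y μ) (hident : ∀ i, IdentDistrib (Y i) Z μ ν)
    (hZ : MemLp Z 2 ν) {δ : ℝ} (hδ : 0 < δ) :
    μ.real {ω | δ * Fintype.card ι ≤ |∑ i, Y i ω - Fintype.card ι * ν[Z]|}
      ≤ Var[Z; ν] / δ ^ 2 / Fintype.card ι := by
  have hY : ∀ i, MemLp (Y i) 2 μ := fun i => (hident i).symm.memLp_snd hZ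
  have hmean : μ[∑ i, Y i] = (Fintype.card ι : ℝ) * ν[Z] := by
    simp [integral_finsetSum _ fun i _ => (hY i).integrable one_le_two,
      fun i => (hident i).integral_eq]
  have hvar : Var[∑ i, Y i; μ] = Fintype.card ι * Var[Z; ν] := by
    rw [IndepFun.variance_sum (fun i _ => hY i) fun i _ j _ hij => hind.indepFun hij]
    simp [fun i => (hident i).variance_eq]
  have hcard : (0 : ℝ) < Fintype.card ι := by exact_mod_cast Fintype.card_pos
  have h := meas_ge_le_variance_div_sq (memLp_finsetSum' Finset.univ fun i _ => hY i)
    (mul_pos hδ hcard)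
  rw [hmean, hvar] at h
  simp only [Finset.sum_apply] at h
  refine (ENNReal.toReal_le_of_le_ofReal
    (by have := variance_nonneg Z ν; positivity) h).trans (le_of_eq ?_)
  field_simp

end Concentration

section Truncation

variable {Ω : Type*} [MeasurableSpace Ω] {μ : Measure Ω} {X : Ω → ℝ}

lemma memLp_two_of_lintegral_sq_ne_top (hX : Measurable X)
    (h : ∫⁻ ω, (‖X ω‖₊ : ℝ≥0∞) ^ 2 ∂μ ≠ ⊤) : MemLp X 2 μ :=
  (memLp_two_iff_integrable_sq hX.aestronglyMeasurable).2
    ⟨(hX.pow_const 2).aestronglyMeasurable, by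
      simpa [HasFiniteIntegral, enorm_pow, lt_top_iff_ne_top, enorm_eq_nnnorm] using h⟩

lemma exists_lt_integral_min_sq [IsFiniteMeasure μ] (hX : Measurable X)
    (h : ∫⁻ ω, (‖X ω‖₊ : ℝ≥0∞) ^ 2 ∂μ = ⊤) (K : ℝ) :
    ∃ M : ℝ, 0 < M ∧ K < ∫ ω, min (X ω ^ 2) M ∂μ := by
  have hlim : Tendsto (fun m : ℕ => ∫⁻ ω, ENNReal.ofReal (min (X ω ^ 2) (m + 1)) ∂μ) atTop
      (𝓝 ⊤) := by
    rw [← h]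
    refine lintegral_tendsto_of_tendsto_of_monotone (fun m => by fun_prop)
      (ae_of_all _ fun ω m m' hm => ENNReal.ofReal_le_ofReal (by gcongr))
      (ae_of_all _ fun ω => tendsto_const_nhds.congr' ?_)
    filter_upwards [eventually_ge_atTop ⌈X ω ^ 2⌉₊] with m hm
    rw [min_eq_left ((Nat.le_ceil _).trans (by exact_mod_cast hm.trans m.le_succ)),
      ← enorm_eq_nnnorm, Real.enorm_eq_ofReal_abs, ← ENNReal.ofReal_pow (abs_nonneg _), sq_abs]
  obtain ⟨m, hm⟩ := (hlim.eventually (lt_mem_nhds (ENNReal.ofReal_lt_top (r := K)))).exists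
  have hint : Integrable (fun ω => min (X ω ^ 2) (m + 1)) μ :=
    Integrable.of_bound (by fun_prop) (m + 1) (ae_of_all _ fun ω => by
      rw [Real.norm_of_nonneg (by positivity)]; exact min_le_right _ _)
  rw [← ofReal_integral_eq_lintegral_ofReal hint (ae_of_all _ fun ω => by positivity)] at hm
  exact ⟨m + 1, by positivity, ((ENNReal.ofReal_lt_ofReal_iff').1 hm).1⟩

lemma abs_clamp_le {M : ℝ} (hM : 0 ≤ M) (x : ℝ) : |max (-M) (min x M)| ≤ M := by
  grind [abs_le]

lemma abs_sub_clamp_le_abs {M : ℝ} (hM : 0 ≤ M) (x : ℝ) : |x - max (-M) (min x M)| ≤ |x| := by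
  grind [abs_le, abs_of_nonneg, abs_of_nonpos]

lemma exists_integral_abs_sub_clamp_le (hX : Integrable X μ) {η : ℝ} (hη : 0 < η) :
    ∃ M : ℝ, 0 < M ∧ ∫ ω, |X ω - max (-M) (min (X ω) M)| ∂μ ≤ η := by
  have hlim : Tendsto (fun m : ℕ => ∫ ω, |X ω - max (-(m + 1 : ℝ)) (min (X ω) (m + 1))| ∂μ) atTop
      (𝓝 0) := by
    rw [← integral_zero Ω ℝ]
    refine tendsto_integral_of_dominated_convergence (fun ω => |X ω|)
      (fun m => by fun_prop) hX.abs (fun m => ae_of_all _ fun ω => ?_)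
      (ae_of_all _ fun ω => tendsto_const_nhds.congr' ?_)
    · rw [Real.norm_of_nonneg (abs_nonneg _)]
      exact abs_sub_clamp_le_abs (by positivity) _
    · filter_upwards [eventually_ge_atTop ⌈|X ω|⌉₊] with m hm
      have : |X ω| ≤ m + 1 := (Nat.le_ceil _).trans (by exact_mod_cast hm.trans m.le_succ)
      grind [abs_le]
  obtain ⟨m, hm⟩ := (hlim.eventually (ge_mem_nhds hη)).exists
  exact ⟨m + 1, by positivity, hm⟩

end Truncation

section IIDMatrix

variable {Ω' Ω : Type*} [MeasureSpace Ω'] [MeasureSpace Ω] [IsProbabilityMeasure (ℙ : Measure Ω)]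

lemma measureReal_block_sum_le_le_exp {n : ℕ} (hn : 0 < n) (X : Ω' → ℝ)
    (A : Ω → Matrix (Fin n) (Fin n) ℝ) (hmeas : ∀ i j, Measurable fun ω => A ω i j)
    (hindep : iIndepFun (fun p : Fin n × Fin n => fun ω => A ω p.1 p.2) ℙ)
    (hident : ∀ i j, IdentDistrib (fun ω => A ω i j) X ℙ ℙ)
    {g : ℝ → ℝ} (hg : Measurable g) {K : ℝ} (hK : 0 < K) (hgK : ∀ x, |g x| ≤ K)
    {θ : ℝ} (hθ : 0 < θ) (S T : Finset (Fin n)) :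
    (ℙ : Measure Ω).real {ω | ∑ p ∈ S ×ˢ T, g (A ω p.1 p.2) ≤ #S * #T * ∫ x, g (X x) ∂ℙ - θ * n ^ 2}
      ≤ exp (-(θ ^ 2 / (2 * K ^ 2) * n ^ 2)) := by
  rcases (S ×ˢ T).eq_empty_or_nonempty with hST | hST
  · have hcard : (#S : ℝ) * #T = 0 := by exact_mod_cast card_product S T ▸ card_eq_zero.2 hST
    have hempty : {ω | ∑ p ∈ S ×ˢ T, g (A ω p.1 p.2) ≤ #S * #T * ∫ x, g (X x) ∂ℙ - θ * n ^ 2}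
        = ∅ := by
      ext ω
      simp only [hST, sum_empty, hcard, zero_mul, zero_sub, Set.mem_ofPred_eq,
        Set.mem_empty_iff_false, iff_false, not_le, Left.neg_neg_iff]
      positivity
    rw [hempty, measureReal_empty]
    positivity
  have hmean : ∀ p : Fin n × Fin n, ∫ ω, g (A ω p.1 p.2) ∂ℙ = ∫ x, g (X x) ∂ℙ :=
    fun p => ((hident p.1 p.2).comp hg).integral_eq
  have h := measureReal_sum_le_sum_integral_sub_le
    (hindep.comp (fun _ => g) fun _ => hg) (fun p => hg.comp (hmeas p.1 p.2))
    (fun p ω => hgK _) (S ×ˢ T) (t := θ * n ^ 2) (by positivity)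
  simp only [Function.comp_apply, hmean, sum_const, card_product, nsmul_eq_mul,
    Nat.cast_mul] at h
  refine h.trans (exp_le_exp.2 ?_)
  have hpos : (0 : ℝ) < #S * #T := by exact_mod_cast card_product S T ▸ hST.card_pos
  have hle := card_mul_card_le_sq S T
  rw [neg_div, neg_le_neg_iff, div_mul_eq_mul_div, div_le_div_iff₀ (by positivity) (by positivity)]
  calc θ ^ 2 * n ^ 2 * (2 * (#S * #T) * K ^ 2) ≤ θ ^ 2 * n ^ 2 * (2 * n ^ 2 * K ^ 2) := by
        gcongr
    _ = (θ * n ^ 2) ^ 2 * (2 * K ^ 2) := by ring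

lemma ae_eventually_forall_block_sum_gt (X : Ω' → ℝ) (A : (n : ℕ) → Ω → Matrix (Fin n) (Fin n) ℝ)
    (hmeas : ∀ n i j, Measurable fun ω => A n ω i j)
    (hindep : ∀ n, iIndepFun (fun p : Fin n × Fin n => fun ω => A n ω p.1 p.2) ℙ)
    (hident : ∀ n i j, IdentDistrib (fun ω => A n ω i j) X ℙ ℙ)
    {g : ℝ → ℝ} (hg : Measurable g) {K : ℝ} (hK : 0 < K) (hgK : ∀ x, |g x| ≤ K)
    {θ : ℝ} (hθ : 0 < θ) :
    ∀ᵐ ω ∂(ℙ : Measure Ω), ∀ᶠ n in atTop, ∀ S T : Finset (Fin n),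
      #S * #T * ∫ x, g (X x) ∂ℙ - θ * n ^ 2 < ∑ p ∈ S ×ˢ T, g (A n ω p.1 p.2) := by
  have hbad : ∀ᶠ n in atTop, (ℙ : Measure Ω).real (⋃ S : Finset (Fin n), ⋃ T : Finset (Fin n),
      {ω | ∑ p ∈ S ×ˢ T, g (A n ω p.1 p.2) ≤ #S * #T * ∫ x, g (X x) ∂ℙ - θ * n ^ 2})
        ≤ 4 ^ n * exp (-(θ ^ 2 / (2 * K ^ 2) * n ^ 2)) := by
    filter_upwards [eventually_gt_atTop 0] with n hn
    refine (measureReal_iUnion_fintype_le _).trans ?_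
    calc _ ≤ ∑ _S : Finset (Fin n), ∑ _T : Finset (Fin n),
          exp (-(θ ^ 2 / (2 * K ^ 2) * n ^ 2)) := by
          gcongr with S _
          refine (measureReal_iUnion_fintype_le _).trans ?_
          gcongr with T _
          exact measureReal_block_sum_le_le_exp hn X (A n) (hmeas n) (hindep n) (hident n) hg hK
            hgK hθ S T
      _ = 4 ^ n * exp (-(θ ^ 2 / (2 * K ^ 2) * n ^ 2)) := by
          simp only [sum_const, card_univ, Fintype.card_finset, Fintype.card_fin, nsmul_eq_mul]
          rw [← mul_assoc, Nat.cast_pow, ← mul_pow]; norm_num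
  filter_upwards [ae_eventually_notMem_of_measureReal_le
    (summable_pow_mul_exp_neg_mul_sq 4 (by positivity)) hbad] with ω hω
  filter_upwards [hω] with n hn S T
  by_contra h
  exact hn (Set.mem_iUnion₂.2 ⟨S, T, le_of_not_gt h⟩)

lemma ae_eventually_sum_lt (X : Ω' → ℝ) (A : (n : ℕ) → Ω → Matrix (Fin n) (Fin n) ℝ)
    (hindep : ∀ n, iIndepFun (fun p : Fin n × Fin n => fun ω => A n ω p.1 p.2) ℙ)
    (hident : ∀ n i j, IdentDistrib (fun ω => A n ω i j) X ℙ ℙ)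
    {h : ℝ → ℝ} (hh : Measurable h) (hhX : MemLp (fun x => h (X x)) 2 ℙ) {δ : ℝ} (hδ : 0 < δ) :
    ∀ᵐ ω ∂(ℙ : Measure Ω), ∀ᶠ n in atTop,
      ∑ p : Fin n × Fin n, h (A n ω p.1 p.2) < n ^ 2 * (∫ x, h (X x) ∂ℙ + δ) := by
  have hbad : ∀ᶠ n : ℕ in atTop, (ℙ : Measure Ω).real {ω | δ * Fintype.card (Fin n × Fin n)
      ≤ |∑ p : Fin n × Fin n, h (A n ω p.1 p.2)
        - Fintype.card (Fin n × Fin n) * ∫ x, h (X x) ∂ℙ|}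
        ≤ Var[fun x => h (X x); ℙ] / δ ^ 2 * ((n : ℝ) ^ 2)⁻¹ := by
    filter_upwards [eventually_gt_atTop 0] with n hn
    have : Nonempty (Fin n × Fin n) := ⟨(⟨0, hn⟩, ⟨0, hn⟩)⟩
    refine (measureReal_abs_sum_sub_ge_le ((hindep n).comp (fun _ => h) fun _ => hh)
      (fun p => (hident n p.1 p.2).comp hh) hhX hδ).trans (le_of_eq ?_)
    simp only [Fintype.card_prod, Fintype.card_fin, Function.comp_def]
    push_cast; ring
  filter_upwards [ae_eventually_notMem_of_measureReal_le
    ((Real.summable_nat_pow_inv.2 one_lt_two).mul_left _) hbad] with ω hω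
  filter_upwards [hω] with n hn
  simp only [Fintype.card_prod, Fintype.card_fin, Nat.cast_mul, not_le] at hn
  have := (abs_lt.1 hn).2
  nlinarith

lemma ae_eventually_mul_sqrt_le_l2OpNorm_of_lintegral_sq_eq_top
    [IsProbabilityMeasure (ℙ : Measure Ω')] (X : Ω' → ℝ) (hX : Measurable X)
    (hsq : ∫⁻ ω, (‖X ω‖₊ : ℝ≥0∞) ^ 2 ∂ℙ = ⊤) {ε : ℝ} (hε : ε < 1)
    (A : (n : ℕ) → Ω → Matrix (Fin n) (Fin n) ℝ) (hmeas : ∀ n i j, Measurable fun ω => A n ω i j)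
    (hindep : ∀ n, iIndepFun (fun p : Fin n × Fin n => fun ω => A n ω p.1 p.2) ℙ)
    (hident : ∀ n i j, IdentDistrib (fun ω => A n ω i j) X ℙ ℙ) (C : ℝ) :
    ∀ᵐ ω ∂(ℙ : Measure Ω), ∀ᶠ n in atTop, ∀ B,
      IsBlockModification ε (A n ω) B → C * √n ≤ l2OpNorm B := by
  obtain ⟨M, hM, hv⟩ := exists_lt_integral_min_sq hX hsq ((C ^ 2 + 1) / (1 - ε) ^ 2)
  have hε' : 0 < (1 - ε) ^ 2 := by nlinarith
  rw [div_lt_iff₀ hε'] at hv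
  have hgM : ∀ x : ℝ, |min (x ^ 2) M| ≤ M := fun x => by
    rw [abs_of_nonneg (by positivity)]; exact min_le_right _ _
  filter_upwards [ae_eventually_forall_block_sum_gt X A hmeas hindep hident (by fun_prop) hM hgM
    one_pos] with ω hω
  filter_upwards [hω, eventually_gt_atTop 0] with n hn hn0 B hB
  obtain ⟨S, T, hST, hBA⟩ := hB.exists_large_block_eq hε.le
  refine mul_sqrt_le_l2OpNorm_of_sq_mul_sq_le_sum_sq hn0 (S := S) (T := T) ?_
  calc C ^ 2 * n ^ 2 ≤ (1 - ε) ^ 2 * n ^ 2 * (∫ ω, min (X ω ^ 2) M ∂ℙ) - 1 * n ^ 2 := by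
        nlinarith
    _ ≤ #S * #T * (∫ ω, min (X ω ^ 2) M ∂ℙ) - 1 * n ^ 2 := by gcongr
    _ ≤ ∑ p ∈ S ×ˢ T, min (A n ω p.1 p.2 ^ 2) M := (hn S T).le
    _ ≤ ∑ p ∈ S ×ˢ T, B p.1 p.2 ^ 2 := by
        gcongr with p hp; rw [hBA p hp]; exact min_le_left _ _

lemma exists_ae_eventually_mul_le_l2OpNorm_of_integral_pos
    [IsProbabilityMeasure (ℙ : Measure Ω')] (X : Ω' → ℝ) (hX : Measurable X) (hX2 : MemLp X 2 ℙ)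
    (hpos : 0 < ∫ ω, X ω ∂ℙ) {ε : ℝ} (hε0 : 0 ≤ ε) (hε1 : ε < 1)
    (A : (n : ℕ) → Ω → Matrix (Fin n) (Fin n) ℝ) (hmeas : ∀ n i j, Measurable fun ω => A n ω i j)
    (hindep : ∀ n, iIndepFun (fun p : Fin n × Fin n => fun ω => A n ω p.1 p.2) ℙ)
    (hident : ∀ n i j, IdentDistrib (fun ω => A n ω i j) X ℙ ℙ) :
    ∃ c > 0, ∀ᵐ ω ∂(ℙ : Measure Ω), ∀ᶠ n in atTop, ∀ B,
      IsBlockModification ε (A n ω) B → c * n ≤ l2OpNorm B := by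
  set μ₀ := ∫ ω, X ω ∂ℙ
  set ρ := (1 - ε) ^ 2
  have hρ : 0 < ρ := by positivity
  have hρ1 : ρ ≤ 1 := by nlinarith
  -- the four error terms below are at most `η n²` each, and `4 η = ρ μ₀ / 2`
  set η := ρ * μ₀ / 8
  have hη : 0 < η := by positivity
  obtain ⟨M, hM, hMη⟩ := exists_integral_abs_sub_clamp_le (hX2.integrable one_le_two) hη
  set g : ℝ → ℝ := fun x => max (-M) (min x M)
  set r : ℝ → ℝ := fun x => |x - g x|
  have hg : Measurable g := by fun_prop
  have hr : Measurable r := by fun_prop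
  have hgM : ∀ x, |g x| ≤ M := abs_clamp_le hM.le
  have hgX : Integrable (fun ω => g (X ω)) ℙ :=
    Integrable.of_bound (by fun_prop) M (ae_of_all _ fun ω => hgM _)
  have hrX : MemLp (fun ω => r (X ω)) 2 ℙ :=
    hX2.mono (by fun_prop) (ae_of_all _ fun ω => by
      simpa only [Real.norm_eq_abs, abs_abs, r, g] using abs_sub_clamp_le_abs hM.le (X ω))
  have hmean : μ₀ - η ≤ ∫ ω, g (X ω) ∂ℙ := by
    have := abs_integral_le_integral_abs (f := fun ω => X ω - g (X ω)) (μ := ℙ)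
    rw [integral_sub (hX2.integrable one_le_two) hgX] at this
    linarith [(abs_le.1 (this.trans hMη)).2]
  refine ⟨ρ * μ₀ / 2, by positivity, ?_⟩
  filter_upwards [ae_eventually_forall_block_sum_gt X A hmeas hindep hident hg hM hgM hη,
    ae_eventually_sum_lt X A hindep hident hr hrX hη] with ω hblock htotal
  filter_upwards [hblock, htotal, eventually_gt_atTop 0] with n hn htn hn0 B hB
  obtain ⟨S, T, hST, hBA⟩ := hB.exists_large_block_eq hε1.le
  refine mul_le_l2OpNorm_of_mul_sq_le_sum hn0 (S := S) (T := T) ?_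
  calc ρ * μ₀ / 2 * n ^ 2 ≤ ρ * n ^ 2 * (μ₀ - η) - η * n ^ 2 - n ^ 2 * (η + η) := by
        have h8 : ρ * μ₀ / 2 * n ^ 2 = 4 * η * n ^ 2 := by simp only [η]; ring
        nlinarith [mul_le_mul_of_nonneg_right hρ1 (by positivity : 0 ≤ η * n ^ 2)]
    _ ≤ #S * #T * ∫ ω, g (X ω) ∂ℙ - η * n ^ 2 - n ^ 2 * (∫ ω, r (X ω) ∂ℙ + η) := by
        gcongr
        simp only [η]; nlinarith
    _ ≤ ∑ p ∈ S ×ˢ T, g (A n ω p.1 p.2) - ∑ p : Fin n × Fin n, r (A n ω p.1 p.2) := by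
        linarith [hn S T]
    _ ≤ ∑ p ∈ S ×ˢ T, B p.1 p.2 := sum_sub_sum_abs_sub_le_sum hBA g

lemma exists_ae_eventually_mul_le_l2OpNorm_of_integral_ne_zero
    [IsProbabilityMeasure (ℙ : Measure Ω')] (X : Ω' → ℝ) (hX : Measurable X) (hX2 : MemLp X 2 ℙ)
    (hne : ∫ ω, X ω ∂ℙ ≠ 0) {ε : ℝ} (hε0 : 0 ≤ ε) (hε1 : ε < 1)
    (A : (n : ℕ) → Ω → Matrix (Fin n) (Fin n) ℝ) (hmeas : ∀ n i j, Measurable fun ω => A n ω i j)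
    (hindep : ∀ n, iIndepFun (fun p : Fin n × Fin n => fun ω => A n ω p.1 p.2) ℙ)
    (hident : ∀ n i j, IdentDistrib (fun ω => A n ω i j) X ℙ ℙ) :
    ∃ c > 0, ∀ᵐ ω ∂(ℙ : Measure Ω), ∀ᶠ n in atTop, ∀ B,
      IsBlockModification ε (A n ω) B → c * n ≤ l2OpNorm B := by
  rcases hne.lt_or_gt with hneg | hpos
  · obtain ⟨c, hc, h⟩ := exists_ae_eventually_mul_le_l2OpNorm_of_integral_pos (fun ω => -X ω)
      hX.neg hX2.neg (by rw [integral_neg]; linarith) hε0 hε1 (fun n ω => -A n ω)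
      (fun n i j => (hmeas n i j).neg)
      (fun n => (hindep n).comp (fun _ x => -x) fun _ => measurable_neg)
      (fun n i j => (hident n i j).comp measurable_neg)
    refine ⟨c, hc, h.mono fun ω hω => hω.mono fun n hn B hB => ?_⟩
    simpa [l2OpNorm_neg] using hn (-B) hB.neg
  · exact exists_ae_eventually_mul_le_l2OpNorm_of_integral_pos X hX hX2 hpos hε0 hε1 A hmeas
      hindep hident

end IIDMatrix

/-- **Global problem.** If the entries of the `n × n` random matrices `A n` are i.i.d. copies of a
random variable `X` with either nonzero mean or infinite second moment, and `ε ∈ (0,1)`, then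
the minimum of `‖Ã‖/√n` over all matrices `Ã` obtained from `A n` by modifying an
`εn × εn` submatrix tends to infinity almost surely. -/
theorem global_problem
    (Ω' : Type) [MeasureSpace Ω'] [IsProbabilityMeasure (ℙ : Measure Ω')]
    (X : Ω' → ℝ) (hXmeas : Measurable X)
    (hmoment : (Integrable X ℙ ∧ ∫ ω, X ω ∂ℙ ≠ 0) ∨
      (∫⁻ ω, (‖X ω‖₊ : ℝ≥0∞) ^ 2 ∂ℙ = ⊤))
    (ε : ℝ) (hε0 : 0 < ε) (hε1 : ε < 1)
    (Ω : Type) [MeasureSpace Ω] [IsProbabilityMeasure (ℙ : Measure Ω)]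
    (A : (n : ℕ) → Ω → Matrix (Fin n) (Fin n) ℝ)
    (hmeas : ∀ n i j, Measurable fun ω => A n ω i j)
    (hindep : ∀ n, iIndepFun
      (fun p : Fin n × Fin n => fun ω => A n ω p.1 p.2) ℙ)
    (hident : ∀ n i j, IdentDistrib (fun ω => A n ω i j) X ℙ ℙ) :
    ∀ᵐ ω ∂(ℙ : Measure Ω), Filter.Tendsto
      (fun n : ℕ => ⨅ B : {B : Matrix (Fin n) (Fin n) ℝ //
          ∃ I J : Finset (Fin n), (I.card : ℝ) ≤ ε * n ∧ (J.card : ℝ) ≤ ε * n ∧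
            ∀ i j, (i ∉ I ∨ j ∉ J) → B i j = A n ω i j},
        l2OpNorm B.1 / Real.sqrt n)
      Filter.atTop Filter.atTop := by
  have key : ∀ C : ℝ, ∀ᵐ ω ∂(ℙ : Measure Ω), ∀ᶠ n in atTop, ∀ B,
      IsBlockModification ε (A n ω) B → C * √n ≤ l2OpNorm B := by
    intro C
    by_cases hsq : ∫⁻ ω, (‖X ω‖₊ : ℝ≥0∞) ^ 2 ∂ℙ = ⊤
    · exact ae_eventually_mul_sqrt_le_l2OpNorm_of_lintegral_sq_eq_top X hXmeas hsq hε1 A hmeas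
        hindep hident C
    obtain ⟨c, hc, h⟩ := exists_ae_eventually_mul_le_l2OpNorm_of_integral_ne_zero X hXmeas
      (memLp_two_of_lintegral_sq_ne_top hXmeas hsq) (hmoment.resolve_right hsq).2 hε0.le hε1
      A hmeas hindep hident
    filter_upwards [h] with ω hω
    filter_upwards [hω, eventually_mul_sqrt_le_mul hc C] with n hn hC B hB
    exact hC.trans (hn B hB)
  filter_upwards [ae_all_iff.2 fun k : ℕ => key k] with ω hω
  refine tendsto_iInf_atTop_of_forall_eventually
    (fun n => ⟨⟨A n ω, IsBlockModification.refl hε0.le _⟩⟩) fun k => ?_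
  filter_upwards [hω k, eventually_gt_atTop 0] with n hn hn0 B
  rw [le_div_iff₀ (by positivity)]
  exact hn B.1 B.2
end

section
/- Let X be a real random variable with X ≥ 0 almost surely and E X ≤ 1, and let ε ∈ (0,1). Then there exists a random variable W, defined on the same probability space and taking values in [0,1], such that X·W ≤ ε^{−1} almost surely and 1 ≤ E(W^{−1}) ≤ 1 + ε. -/
open MeasureTheory ProbabilityTheory
open scoped ENNReal NNReal

/-! Take `W = (max 1 (ε X))⁻¹`, so that `W⁻¹ = max 1 (ε X)`. Then `X W ≤ ε⁻¹` pointwise, and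
`1 ≤ max 1 (ε X) ≤ 1 + ε X` for `X ≥ 0`; integrating gives `1 ≤ E W⁻¹ ≤ 1 + ε E X ≤ 1 + ε`. -/

lemma mul_inv_max_one_mul_le {ε x : ℝ} (hε : 0 < ε) : x * (max 1 (ε * x))⁻¹ ≤ ε⁻¹ := by
  have hmax : 0 < max 1 (ε * x) := lt_max_of_lt_left one_pos
  rw [← div_eq_mul_inv, div_le_iff₀ hmax]
  calc x = ε⁻¹ * (ε * x) := by field_simp
    _ ≤ ε⁻¹ * max 1 (ε * x) := by gcongr; exact le_max_right _ _

section IntegralMaxOne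

variable {Ω : Type*} [MeasurableSpace Ω] {μ : Measure Ω} {Y : Ω → ℝ}

lemma one_le_integral_max_one [IsProbabilityMeasure μ] (hY : Integrable Y μ) :
    1 ≤ ∫ ω, max 1 (Y ω) ∂μ := by
  calc (1 : ℝ) = ∫ _ω, (1 : ℝ) ∂μ := by simp
    _ ≤ ∫ ω, max 1 (Y ω) ∂μ :=
      integral_mono (integrable_const 1) ((integrable_const 1).sup hY) fun ω => le_max_left _ _

lemma integral_max_one_le [IsProbabilityMeasure μ] (hY0 : 0 ≤ᵐ[μ] Y) (hY : Integrable Y μ) :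
    ∫ ω, max 1 (Y ω) ∂μ ≤ 1 + ∫ ω, Y ω ∂μ := by
  calc ∫ ω, max 1 (Y ω) ∂μ ≤ ∫ ω, (1 + Y ω) ∂μ := by
        refine integral_mono_ae ((integrable_const 1).sup hY) ((integrable_const 1).add hY) ?_
        filter_upwards [hY0] with ω hω
        exact max_le (le_add_of_nonneg_right hω) (le_add_of_nonneg_left zero_le_one)
    _ = 1 + ∫ ω, Y ω ∂μ := by rw [integral_add (integrable_const 1) hY]; simp

end IntegralMaxOne

theorem damping_one_rv_general
    (Ω : Type) [MeasureSpace Ω] [IsProbabilityMeasure (ℙ : Measure Ω)]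
    (X : Ω → ℝ) (hXmeas : Measurable X)
    (hX0 : ∀ᵐ ω ∂ℙ, 0 ≤ X ω)
    (hXint : Integrable X ℙ) (hXmean : ∫ ω, X ω ∂ℙ ≤ 1)
    (ε : ℝ) (hε0 : 0 < ε) :
    ∃ W : Ω → ℝ, Measurable W ∧ (∀ ω, W ω ∈ Set.Icc (0 : ℝ) 1) ∧
      (∀ᵐ ω ∂ℙ, X ω * W ω ≤ ε⁻¹) ∧
      Integrable (fun ω => (W ω)⁻¹) ℙ ∧
      1 ≤ ∫ ω, (W ω)⁻¹ ∂ℙ ∧ ∫ ω, (W ω)⁻¹ ∂ℙ ≤ 1 + ε := by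
  have hεX : Integrable (fun ω => ε * X ω) ℙ := hXint.const_mul ε
  have hεX0 : ∀ᵐ ω ∂ℙ, 0 ≤ ε * X ω := by
    filter_upwards [hX0] with ω hω using mul_nonneg hε0.le hω
  refine ⟨fun ω => (max 1 (ε * X ω))⁻¹, (measurable_const.max (hXmeas.const_mul ε)).inv,
    fun ω => ⟨inv_nonneg.2 (zero_le_one.trans (le_max_left _ _)),
      inv_le_one_of_one_le₀ (le_max_left _ _)⟩,
    .of_forall fun ω => mul_inv_max_one_mul_le hε0, ?_, ?_, ?_⟩ <;> simp only [inv_inv]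
  · exact (integrable_const 1).sup hεX
  · exact one_le_integral_max_one hεX
  · calc ∫ ω, max 1 (ε * X ω) ∂ℙ ≤ 1 + ∫ ω, ε * X ω ∂ℙ := integral_max_one_le hεX0 hεX
      _ = 1 + ε * ∫ ω, X ω ∂ℙ := by rw [integral_const_mul]
      _ ≤ 1 + ε := by nlinarith

/-- **Damping one random variable.** If `X ≥ 0` a.s. and `E X ≤ 1`, then for any `ε ∈ (0,1)`
there is a random variable `W` with values in `[0,1]` such that `X·W ≤ ε⁻¹` almost surely and
`1 ≤ E(W⁻¹) ≤ 1 + ε`. -/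
theorem damping_one_rv
    (Ω : Type) [MeasureSpace Ω] [IsProbabilityMeasure (ℙ : Measure Ω)]
    (X : Ω → ℝ) (hXmeas : Measurable X)
    (hX0 : ∀ᵐ ω ∂ℙ, 0 ≤ X ω)
    (hXint : Integrable X ℙ) (hXmean : ∫ ω, X ω ∂ℙ ≤ 1)
    (ε : ℝ) (hε0 : 0 < ε) (hε1 : ε < 1) :
    ∃ W : Ω → ℝ, Measurable W ∧ (∀ ω, W ω ∈ Set.Icc (0 : ℝ) 1) ∧
      (∀ᵐ ω ∂ℙ, X ω * W ω ≤ ε⁻¹) ∧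
      Integrable (fun ω => (W ω)⁻¹) ℙ ∧
      1 ≤ ∫ ω, (W ω)⁻¹ ∂ℙ ∧ ∫ ω, (W ω)⁻¹ ∂ℙ ≤ 1 + ε :=
  damping_one_rv_general Ω X hXmeas hX0 hXint hXmean ε hε0
end

section
/- Let X be a nonnegative real random variable with a continuous cumulative distribution function. Then there exists a nonnegative random variable X′ such that: (1) E X′ ≤ 4·E X; (2) X′ stochastically dominates X, i.e. P(X′ ≥ t) ≥ P(X ≥ t) for all t ≥ 0; and (3) X′ = ∑_{k=0}^∞ q_k ξ_k, where q_k are nonnegative real numbers and ξ_k are independent Bernoulli random variables with P(ξ_k = 1) = 2^{−k}. -/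
/-!
Let `T k` be the least `t ≥ 0` with `P(X ≥ t) ≤ 2^{-k}` and take `X' = ∑ T (k+1) ξ_k`; by
Borel–Cantelli almost surely only finitely many `ξ_k` are nonzero. If
`2^{-(k+1)} < P(X ≥ t) ≤ 2^{-k}` then `t ≤ T (k+1)`, while the event `ξ_k = 1` forces
`X' ≥ T (k+1)` and has probability `2^{-k}`: this is the domination. For the mean,
`E X' = ∑ 2^{-k} T (k+1) = ∫_0^∞ ∑_{k : t < T (k+1)} 2^{-k} dt`, and for fixed `t` the inner sum is
at most the geometric tail `2^{1-m} = 4 · 2^{-(m+1)} < 4 P(X ≥ t)` from its first index `m`.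
-/

open MeasureTheory ProbabilityTheory Filter Set unitInterval
open scoped ENNReal NNReal Topology

noncomputable section

lemma tsum_ite_inv_two_pow_le_four_mul (P : ℕ → Prop) [DecidablePred P] {c : ℝ≥0∞}
    (h : ∀ k, P k → 2⁻¹ ^ (k + 1) ≤ c) :
    ∑' k, (if P k then (2⁻¹ : ℝ≥0∞) ^ k else 0) ≤ 4 * c := by
  by_cases hP : ∃ k, P k
  swap
  · push Not at hP
    simp [hP]
  set m := Nat.find hP
  have hsupp : Function.support (fun k => if P k then (2⁻¹ : ℝ≥0∞) ^ k else 0) ⊆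
      range (· + m) := by
    intro k hk
    have hk : P k := by by_contra h; simp [h] at hk
    exact ⟨k - m, Nat.sub_add_cancel (Nat.find_min' hP hk)⟩
  calc ∑' k, (if P k then (2⁻¹ : ℝ≥0∞) ^ k else 0)
      = ∑' k, (if P (k + m) then (2⁻¹ : ℝ≥0∞) ^ (k + m) else 0) :=
        ((add_left_injective m).tsum_eq hsupp).symm
    _ ≤ ∑' k, (2⁻¹ : ℝ≥0∞) ^ (k + m) := ENNReal.tsum_le_tsum fun k => by split_ifs <;> simp
    _ = 4 * 2⁻¹ * 2⁻¹ ^ m := by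
        rw [show (4 : ℝ≥0∞) = 2 * 2 by norm_num,
          ENNReal.mul_inv_cancel_right two_ne_zero ENNReal.ofNat_ne_top]
        simp only [pow_add, ENNReal.tsum_mul_right, ENNReal.tsum_geometric_two]
    _ = 4 * 2⁻¹ ^ (m + 1) := by rw [pow_succ', mul_assoc]
    _ ≤ 4 * c := by gcongr; exact h m (Nat.find_spec hP)

lemma exists_inv_two_pow_succ_lt_le {c : ℝ≥0∞} (hc0 : c ≠ 0) (hc1 : c ≤ 1) :
    ∃ k : ℕ, 2⁻¹ ^ (k + 1) < c ∧ c ≤ 2⁻¹ ^ k := by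
  have hex : ∃ k : ℕ, (2⁻¹ : ℝ≥0∞) ^ (k + 1) < c := by
    obtain ⟨n, hn⟩ := ENNReal.exists_inv_two_pow_lt hc0
    exact ⟨n, lt_of_le_of_lt (pow_le_pow_right_of_le_one' (by norm_num) n.le_succ) hn⟩
  refine ⟨Nat.find hex, Nat.find_spec hex, ?_⟩
  cases hk : Nat.find hex with
  | zero => simpa using hc1
  | succ n => simpa using Nat.find_min hex (hk ▸ n.lt_succ_self)

def tailQuantile (G : ℝ → ℝ≥0∞) (ε : ℝ≥0∞) : ℝ := sInf {t | 0 ≤ t ∧ G t ≤ ε}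

section TailQuantile

variable {G : ℝ → ℝ≥0∞} {ε : ℝ≥0∞} {t : ℝ}

lemma tailQuantile_nonneg (G : ℝ → ℝ≥0∞) (ε : ℝ≥0∞) : 0 ≤ tailQuantile G ε :=
  Real.sInf_nonneg fun _ ht => ht.1

lemma lt_of_lt_tailQuantile (ht : 0 ≤ t) (hlt : t < tailQuantile G ε) : ε < G t := by
  by_contra! hle
  exact hlt.not_ge (csInf_le ⟨0, fun _ hs => hs.1⟩ ⟨ht, hle⟩)

lemma le_of_tailQuantile_lt (hG : Antitone G) (hε : ∃ s, 0 ≤ s ∧ G s ≤ ε)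
    (hlt : tailQuantile G ε < t) : G t ≤ ε := by
  obtain ⟨s, hs, hst⟩ := (csInf_lt_iff ⟨0, fun _ hs => hs.1⟩ hε).1 hlt
  exact (hG hst.le).trans hs.2

lemma exists_le_inv_two_pow_and_le_tailQuantile (hG : Antitone G)
    (hne : ∀ ε ≠ 0, ∃ s, 0 ≤ s ∧ G s ≤ ε) (h0 : G t ≠ 0) (h1 : G t ≤ 1) :
    ∃ k : ℕ, G t ≤ 2⁻¹ ^ k ∧ t ≤ tailQuantile G (2⁻¹ ^ (k + 1)) := by
  obtain ⟨k, hk_lt, hk_le⟩ := exists_inv_two_pow_succ_lt_le h0 h1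
  refine ⟨k, hk_le, not_lt.1 fun hlt => ?_⟩
  exact (le_of_tailQuantile_lt hG (hne _ (by simp)) hlt).not_gt hk_lt

lemma setLIntegral_Ioi_zero_indicator_Iio (r : ℝ) (c : ℝ≥0∞) :
    ∫⁻ t in Ioi 0, (Iio r).indicator (fun _ => c) t = c * ENNReal.ofReal r := by
  rw [lintegral_indicator_const measurableSet_Iio, Measure.restrict_apply measurableSet_Iio,
    Iio_inter_Ioi, Real.volume_Ioo, sub_zero]

lemma tsum_ofReal_tailQuantile_mul_le (G : ℝ → ℝ≥0∞) :
    ∑' k, ENNReal.ofReal (tailQuantile G (2⁻¹ ^ (k + 1))) * 2⁻¹ ^ k ≤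
      4 * ∫⁻ t in Ioi 0, G t := by
  calc ∑' k, ENNReal.ofReal (tailQuantile G (2⁻¹ ^ (k + 1))) * 2⁻¹ ^ k
      = ∑' k, ∫⁻ t in Ioi 0,
          (Iio (tailQuantile G (2⁻¹ ^ (k + 1)))).indicator (fun _ => 2⁻¹ ^ k) t := by
        simp only [setLIntegral_Ioi_zero_indicator_Iio, mul_comm]
    _ = ∫⁻ t in Ioi 0, ∑' k,
          (Iio (tailQuantile G (2⁻¹ ^ (k + 1)))).indicator (fun _ => 2⁻¹ ^ k) t :=
        (lintegral_tsum fun k => (measurable_const.indicator measurableSet_Iio).aemeasurable).symm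
    _ ≤ ∫⁻ t in Ioi 0, 4 * G t := by
        refine setLIntegral_mono' measurableSet_Ioi fun t ht => ?_
        simp only [indicator_apply, mem_Iio]
        exact tsum_ite_inv_two_pow_le_four_mul _ fun k hk =>
          (lt_of_lt_tailQuantile (le_of_lt ht) hk).le
    _ = 4 * ∫⁻ t in Ioi 0, G t := lintegral_const_mul' 4 G (by norm_num)

end TailQuantile

lemma exists_nonneg_measure_le_le {Ω : Type*} [MeasurableSpace Ω] {μ : Measure Ω}
    [IsFiniteMeasure μ] {X : Ω → ℝ} (hX : AEMeasurable X μ) {ε : ℝ≥0∞} (hε : ε ≠ 0) :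
    ∃ t : ℝ, 0 ≤ t ∧ μ {ω | t ≤ X ω} ≤ ε := by
  have hlim : Tendsto (fun n : ℕ => μ {ω | (n : ℝ) ≤ X ω}) atTop (𝓝 0) := by
    have hempty : ⋂ n : ℕ, {ω | (n : ℝ) ≤ X ω} = ∅ :=
      iInter_eq_empty_iff.2 fun ω => (exists_nat_gt (X ω)).imp fun _ hn => hn.not_ge
    rw [← measure_empty (μ := μ), ← hempty]
    exact tendsto_measure_iInter_atTop (fun n => hX.nullMeasurableSet_preimage measurableSet_Ici)
      (fun m n hmn ω (hω : (n : ℝ) ≤ X ω) => (Nat.cast_le.2 hmn).trans hω) ⟨0, measure_ne_top μ _⟩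
  obtain ⟨n, hn⟩ := (hlim.eventually_le_const (pos_iff_ne_zero.2 hε)).exists
  exact ⟨n, n.cast_nonneg, hn⟩

lemma ENNReal.ofReal_tsum_le_tsum_ofReal {ι : Type*} {f : ι → ℝ} (hf : ∀ i, 0 ≤ f i) :
    ENNReal.ofReal (∑' i, f i) ≤ ∑' i, ENNReal.ofReal (f i) := by
  by_cases hs : Summable f
  · exact (ENNReal.ofReal_tsum_of_nonneg hf hs).le
  · simp [tsum_eq_zero_of_not_summable hs]

section IndicatorSeries

variable {Ω : Type*} [MeasurableSpace Ω] {μ : Measure Ω} {q : ℕ → ℝ} {A : ℕ → Set Ω}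

def indicatorSeries (q : ℕ → ℝ) (A : ℕ → Set Ω) (ω : Ω) : ℝ :=
  ∑' k, q k * (A k).indicator 1 ω

omit [MeasurableSpace Ω] in
lemma indicatorSeries_nonneg (hq : ∀ k, 0 ≤ q k) (ω : Ω) : 0 ≤ indicatorSeries q A ω :=
  tsum_nonneg fun k => mul_nonneg (hq k) (indicator_nonneg (fun _ _ => zero_le_one) ω)

lemma measurable_indicatorSeries (hA : ∀ k, MeasurableSet (A k)) :
    Measurable (indicatorSeries q A) :=
  Measurable.tsum fun k => measurable_const.mul (measurable_const.indicator (hA k))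

lemma lintegral_ofReal_indicatorSeries_le (hq : ∀ k, 0 ≤ q k) (hA : ∀ k, MeasurableSet (A k)) :
    ∫⁻ ω, ENNReal.ofReal (indicatorSeries q A ω) ∂μ ≤ ∑' k, ENNReal.ofReal (q k) * μ (A k) := by
  calc ∫⁻ ω, ENNReal.ofReal (indicatorSeries q A ω) ∂μ
      ≤ ∫⁻ ω, ∑' k, (A k).indicator (fun _ => ENNReal.ofReal (q k)) ω ∂μ := by
        refine lintegral_mono fun ω => (ENNReal.ofReal_tsum_le_tsum_ofReal fun k =>
          mul_nonneg (hq k) (indicator_nonneg (fun _ _ => zero_le_one) ω)).trans_eq ?_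
        refine tsum_congr fun k => ?_
        by_cases hω : ω ∈ A k <;> simp [hω]
    _ = ∑' k, ENNReal.ofReal (q k) * μ (A k) := by
        rw [lintegral_tsum fun k => (measurable_const.indicator (hA k)).aemeasurable]
        simp only [lintegral_indicator_const (hA _)]

lemma ae_hasSum_indicatorSeries (hsum : ∑' k, μ (A k) ≠ ∞) :
    ∀ᵐ ω ∂μ, HasSum (fun k => q k * (A k).indicator 1 ω) (indicatorSeries q A ω) := by
  filter_upwards [ae_eventually_notMem hsum] with ω hω
  obtain ⟨N, hN⟩ := eventually_atTop.1 hω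
  refine (summable_of_ne_finset_zero (s := Finset.range N) fun k hk => ?_).hasSum
  rw [indicator_of_notMem (hN k (by simpa using hk)), mul_zero]

lemma measure_le_measure_le_indicatorSeries (hq : ∀ k, 0 ≤ q k) (hsum : ∑' k, μ (A k) ≠ ∞)
    {k : ℕ} {t : ℝ} (ht : t ≤ q k) : μ (A k) ≤ μ {ω | t ≤ indicatorSeries q A ω} := by
  refine measure_mono_ae ?_
  filter_upwards [ae_hasSum_indicatorSeries (q := q) hsum] with ω hω_sum hω
  calc t ≤ q k * (A k).indicator 1 ω := by simpa [indicator_of_mem hω] using ht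
    _ ≤ indicatorSeries q A ω := hω_sum.summable.le_tsum k fun j _ =>
        mul_nonneg (hq j) (indicator_nonneg (fun _ _ => zero_le_one) ω)

end IndicatorSeries

section BernoulliProduct

variable {ι : Type*} (p : ι → I)

def bernoulliProduct : Measure (ι → Bool) :=
  Measure.infinitePi fun i => bernoulliMeasure true false (p i)

instance : IsProbabilityMeasure (bernoulliProduct p) := by
  unfold bernoulliProduct; infer_instance

lemma bernoulliProduct_eval_true (i : ι) :
    bernoulliProduct p {ω | ω i = true} = ENNReal.ofReal (p i) := by
  refine ((measurePreserving_eval_infinitePi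
    (fun i => bernoulliMeasure true false (p i)) i).measure_preimage
    (measurableSet_singleton true).nullMeasurableSet).trans ?_
  rw [bernoulliMeasure_apply_of_mem_of_notMem _ (measurableSet_singleton true) rfl (by simp),
    ENNReal.ofReal, ENNReal.coe_inj]
  ext
  simp [(p i).2.1]

lemma iIndepFun_indicator_bernoulliProduct :
    iIndepFun (fun i => {ω : ι → Bool | ω i = true}.indicator (1 : (ι → Bool) → ℝ))
      (bernoulliProduct p) :=
  iIndepFun_infinitePi (X := fun _ => ({true} : Set Bool).indicator (1 : Bool → ℝ))
    fun _ => measurable_from_top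

end BernoulliProduct

end

theorem discretization_general
    (Ω : Type) [MeasureSpace Ω] [IsProbabilityMeasure (ℙ : Measure Ω)]
    (X : Ω → ℝ) (hXmeas : Measurable X) (hX0 : ∀ ω, 0 ≤ X ω) :
    ∃ (Ω' : Type) (_ : MeasureSpace Ω') (_ : IsProbabilityMeasure (ℙ : Measure Ω'))
      (X' : Ω' → ℝ) (q : ℕ → ℝ) (ξ : ℕ → Ω' → ℝ),
      Measurable X' ∧ (∀ ω', 0 ≤ X' ω') ∧
      -- (1) `E X' ≤ 4 E X`
      (∫⁻ ω', ENNReal.ofReal (X' ω') ∂ℙ ≤ 4 * ∫⁻ ω, ENNReal.ofReal (X ω) ∂ℙ) ∧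
      -- (2) stochastic domination
      (∀ t : ℝ, 0 ≤ t → ℙ {ω | t ≤ X ω} ≤ ℙ {ω' | t ≤ X' ω'}) ∧
      -- (3) `X' = ∑_k q_k ξ_k` with `ξ_k` independent Bernoulli `2^{-k}`
      (∀ k, 0 ≤ q k) ∧
      (∀ k, Measurable (ξ k)) ∧
      iIndepFun ξ ℙ ∧
      (∀ k ω', ξ k ω' = 0 ∨ ξ k ω' = 1) ∧
      (∀ k, ℙ {ω' | ξ k ω' = 1} = (2 : ℝ≥0∞)⁻¹ ^ k) ∧
      (∀ᵐ ω' ∂ℙ, HasSum (fun k => q k * ξ k ω') (X' ω')) := by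
  set G : ℝ → ℝ≥0∞ := fun t => ℙ {ω | t ≤ X ω}
  have hG : Antitone G := fun s t hst => measure_mono fun ω (h : t ≤ X ω) => hst.trans h
  set q : ℕ → ℝ := fun k => tailQuantile G (2⁻¹ ^ (k + 1))
  have hq : ∀ k, 0 ≤ q k := fun k => tailQuantile_nonneg _ _
  set A : ℕ → Set (ℕ → Bool) := fun k => {ω | ω k = true}
  have hA : ∀ k, MeasurableSet (A k) := fun k =>
    (measurableSet_singleton true).preimage (measurable_pi_apply k)
  let _ : MeasureSpace (ℕ → Bool) :=
    ⟨bernoulliProduct fun k => ⟨2⁻¹ ^ k, by positivity, pow_le_one₀ (by norm_num) (by norm_num)⟩⟩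
  have hμA : ∀ k, ℙ (A k) = 2⁻¹ ^ k := fun k => by
    rw [← ENNReal.ofReal_ofNat 2, ← ENNReal.ofReal_inv_of_pos two_pos,
      ← ENNReal.ofReal_pow (by norm_num)]
    exact bernoulliProduct_eval_true _ k
  have hsumA : ∑' k, ℙ (A k) ≠ ∞ := by simp [hμA]
  refine ⟨ℕ → Bool, inferInstance, inferInstanceAs (IsProbabilityMeasure (bernoulliProduct _)),
    indicatorSeries q A, q, fun k => (A k).indicator 1, measurable_indicatorSeries hA,
    indicatorSeries_nonneg hq, ?_, ?_, hq, fun k => measurable_const.indicator (hA k),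
    iIndepFun_indicator_bernoulliProduct _, fun k ω => indicator_eq_zero_or_self _ _ _,
    fun k => by simp only [indicator_eq_one_iff_mem, ofPred_mem_eq, hμA],
    ae_hasSum_indicatorSeries hsumA⟩
  · calc ∫⁻ ω, ENNReal.ofReal (indicatorSeries q A ω) ∂ℙ
        ≤ ∑' k, ENNReal.ofReal (q k) * ℙ (A k) := lintegral_ofReal_indicatorSeries_le hq hA
      _ ≤ 4 * ∫⁻ t in Ioi 0, G t := by
        simpa only [hμA] using tsum_ofReal_tailQuantile_mul_le G
      _ = 4 * ∫⁻ ω, ENNReal.ofReal (X ω) ∂ℙ := by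
        rw [lintegral_eq_lintegral_meas_le ℙ (ae_of_all _ hX0) hXmeas.aemeasurable]
  · intro t _
    rcases eq_or_ne (G t) 0 with h0 | h0
    · exact h0.trans_le zero_le
    obtain ⟨k, hGk, htq⟩ := exists_le_inv_two_pow_and_le_tailQuantile hG
      (fun ε hε => exists_nonneg_measure_le_le hXmeas.aemeasurable hε) h0 prob_le_one
    calc G t ≤ 2⁻¹ ^ k := hGk
      _ = ℙ (A k) := (hμA k).symm
      _ ≤ _ := measure_le_measure_le_indicatorSeries hq hsumA htq

/-- **Discretization.** For any nonnegative random variable `X` with continuous cumulative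
distribution function there is a nonnegative random variable `X'` (on some probability space)
such that `E X' ≤ 4 E X`, `X'` stochastically dominates `X`, and `X'` is a sum
`∑_k q_k ξ_k` of scaled independent Bernoulli random variables with `P(ξ_k = 1) = 2^{-k}`. -/
theorem discretization
    (Ω : Type) [MeasureSpace Ω] [IsProbabilityMeasure (ℙ : Measure Ω)]
    (X : Ω → ℝ) (hXmeas : Measurable X) (hX0 : ∀ ω, 0 ≤ X ω)
    (hcdf : Continuous fun t : ℝ => (ℙ {ω | X ω ≤ t}).toReal) :
    ∃ (Ω' : Type) (_ : MeasureSpace Ω') (_ : IsProbabilityMeasure (ℙ : Measure Ω'))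
      (X' : Ω' → ℝ) (q : ℕ → ℝ) (ξ : ℕ → Ω' → ℝ),
      Measurable X' ∧ (∀ ω', 0 ≤ X' ω') ∧
      -- (1) `E X' ≤ 4 E X`
      (∫⁻ ω', ENNReal.ofReal (X' ω') ∂ℙ ≤ 4 * ∫⁻ ω, ENNReal.ofReal (X ω) ∂ℙ) ∧
      -- (2) stochastic domination
      (∀ t : ℝ, 0 ≤ t → ℙ {ω | t ≤ X ω} ≤ ℙ {ω' | t ≤ X' ω'}) ∧
      -- (3) `X' = ∑_k q_k ξ_k` with `ξ_k` independent Bernoulli `2^{-k}`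
      (∀ k, 0 ≤ q k) ∧
      (∀ k, Measurable (ξ k)) ∧
      iIndepFun ξ ℙ ∧
      (∀ k ω', ξ k ω' = 0 ∨ ξ k ω' = 1) ∧
      (∀ k, ℙ {ω' | ξ k ω' = 1} = (2 : ℝ≥0∞)⁻¹ ^ k) ∧
      (∀ᵐ ω' ∂ℙ, HasSum (fun k => q k * ξ k ω') (X' ω')) :=
  discretization_general Ω X hXmeas hX0
end

section
/- There exists an absolute constant C such that the following holds. Let A be an n × n random matrix with i.i.d. entries A_{ij} that have mean zero, variance at most one, and satisfy |A_{ij}| ≤ √n/2 almost surely, and let ε ∈ (0,1/2]. Then with probability at least 1 − exp(−εn) there exists a set J ⊆ {1,...,n} with |J| ≤ εn such that the matrix A_{J^c}, obtained from A by replacing all entries in the columns indexed by J with zero, satisfies ‖A_{J^c}‖_{2→∞} ≤ C·√(ln ε^{−1})·√n. -/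
open MeasureTheory ProbabilityTheory
open scoped ENNReal NNReal

/-- The `ℓ₂ → ℓ∞` norm of a matrix: the maximum Euclidean norm of its rows. -/
noncomputable def norm2toInf {n : ℕ} (A : Matrix (Fin n) (Fin n) ℝ) : ℝ :=
  ⨆ i, Real.sqrt (∑ j, (A i j) ^ 2)

/-- The matrix obtained from `A` by setting to zero all entries in the columns indexed by `J`. -/
noncomputable def colZero {n : ℕ} (A : Matrix (Fin n) (Fin n) ℝ) (J : Finset (Fin n)) :
    Matrix (Fin n) (Fin n) ℝ :=
  Matrix.of fun i j => if j ∈ J then 0 else A i j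

/-!
Fix a row `x` of `A`, dyadic levels `K 2^t` for `t ≤ T` with `K = 300 log ε⁻¹` and `K 2^T ≍ n`,
and let `N_t(x)` (`numAbove`) count the entries with `x_j² > K 2^t`. Call level `t` overfull
when `N_t(x)` exceeds `c_t = e^5 𝔼 N_t + 4K + (T - t)` (`threshold`), and remove the columns of
the large entries of `x` at every overfull level (`removedCols`). Each kept entry satisfies
`x_j² ≤ K + ∑_{t : K 2^t < x_j²} K 2^t`, and at a level that is not overfull at most `c_t` kept
entries contribute `K 2^t`; since `∑_t K 2^t 𝔼 N_t ≤ 2 ∑_j 𝔼 x_j² ≤ 2n`, the kept part of the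
row has squared norm at most `8Kn`.

The number of columns removed because of one row is at most the largest overfull count `F`
(`overflow`). By a Chernoff bound `ℙ(N_t ≥ max(c_t, m)) ≤ e^{-4 max(c_t, m)}`; the `4K` in `c_t`
makes this `e^{-4K}`-small and the `T - t` makes it summable over levels, so
`𝔼 e^{2F} ≤ 1 + 4e^{-4K}`. Rows are independent, hence
`ℙ(∑_i F_i ≥ εn) ≤ e^{-2εn} (1 + 4e^{-4K})^n ≤ e^{-εn}`.
-/

open Finset Real

lemma sum_range_exp_neg_le_two (N : ℕ) : ∑ s ∈ range N, exp (-(s : ℝ)) ≤ 2 := by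
  have h2 : 2 ≤ exp 1 := by linarith [add_one_le_exp 1]
  have hx : exp (-1) ≤ 1 / 2 := by
    rw [exp_neg, one_div]; exact inv_anti₀ two_pos h2
  calc ∑ s ∈ range N, exp (-(s : ℝ)) = ∑ s ∈ Ico 0 N, exp (-1) ^ s := by
        rw [range_eq_Ico]
        exact sum_congr rfl fun s _ ↦ by rw [← exp_nat_mul]; ring_nf
    _ ≤ exp (-1) ^ 0 / (1 - exp (-1)) :=
        geom_sum_Ico_le_of_lt_one (exp_pos _).le (by linarith)
    _ ≤ 2 := by rw [pow_zero, div_le_iff₀ (by linarith)]; linarith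

lemma exp_five_le_mul_log_inv {ε : ℝ} (hε : 0 < ε) (hε2 : ε ≤ 1 / 2) :
    exp 5 ≤ 300 * log ε⁻¹ := by
  have hlog : log 2 ≤ log ε⁻¹ :=
    log_le_log two_pos (by rw [show (2 : ℝ) = (1 / 2)⁻¹ by norm_num]; exact inv_anti₀ hε hε2)
  have he : exp 5 < 149 := by
    rw [show (5 : ℝ) = (5 : ℕ) * 1 by norm_num, exp_nat_mul]
    calc exp 1 ^ 5 < 2.7182818286 ^ 5 := by gcongr; exact exp_one_lt_d9
      _ < 149 := by norm_num
  linarith [log_two_gt_d9]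

lemma four_mul_exp_neg_mul_log_inv_le {ε : ℝ} (hε : 0 < ε) (hε2 : ε ≤ 1 / 2) :
    4 * exp (-4 * (300 * log ε⁻¹)) ≤ ε := by
  have hlog : 0 ≤ log ε⁻¹ := log_nonneg (one_le_inv₀ hε |>.2 (by linarith))
  have : exp (-4 * (300 * log ε⁻¹)) ≤ ε ^ 3 :=
    calc exp (-4 * (300 * log ε⁻¹)) ≤ exp ((3 : ℕ) * log ε) := by
          rw [log_inv] at hlog ⊢; exact exp_le_exp.2 (by push_cast; nlinarith)
      _ = ε ^ 3 := by rw [exp_nat_mul, exp_log hε]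
  nlinarith [pow_le_pow_left₀ hε.le hε2 2]

lemma exp_neg_two_mul_mul_one_add_pow_le {δ ε : ℝ} (hδ : 0 ≤ δ) (hδε : δ ≤ ε) (n : ℕ) :
    exp (-2 * (ε * n)) * (1 + δ) ^ n ≤ exp (-(ε * n)) :=
  calc exp (-2 * (ε * n)) * (1 + δ) ^ n ≤ exp (-2 * (ε * n)) * exp (ε * n) := by
        gcongr
        calc (1 + δ) ^ n ≤ exp δ ^ n := by gcongr; linarith [add_one_le_exp δ]
          _ = exp (n * δ) := (exp_nat_mul δ n).symm
          _ ≤ exp (ε * n) := exp_le_exp.2 (by nlinarith [(n.cast_nonneg : (0 : ℝ) ≤ n)])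
    _ = exp (-(ε * n)) := by rw [← exp_add]; ring_nf

section Probability

variable {Ω : Type*} [MeasurableSpace Ω] {P : Measure Ω}

lemma ProbabilityTheory.iIndepFun.curry {ι κ β : Type*} [MeasurableSpace β]
    {X : ι → κ → Ω → β} (mX : ∀ i j, Measurable (X i j))
    (h : iIndepFun (fun p : ι × κ ↦ X p.1 p.2) P) :
    iIndepFun (fun i ω ↦ (X i · ω)) P := by
  have := h.isProbabilityMeasure
  have hσ : iIndepFun (fun (p : (_ : ι) × κ) ↦ X p.1 p.2) P :=
    h.precomp (g := Equiv.sigmaEquivProd ι κ) (Equiv.injective _)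
  have hrow (i : ι) : iIndepFun (X i) P :=
    h.precomp (g := fun j ↦ (i, j)) fun _ _ hj ↦ (Prod.mk.inj hj).2
  have (i : ι) (j : κ) : IsProbabilityMeasure (P.map (X i j)) :=
    Measure.isProbabilityMeasure_map (mX i j).aemeasurable
  have hcurry : MeasurableEquiv.piCurry (fun _ _ ↦ β) ∘ (fun ω (p : (_ : ι) × κ) ↦ X p.1 p.2 ω)
      = fun ω i j ↦ X i j ω := by
    ext; simp [Sigma.curry]
  rw [iIndepFun_iff_map_fun_eq_infinitePi_map (by fun_prop), ← hcurry,
    ← Measure.map_map (by fun_prop) (by fun_prop),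
    (iIndepFun_iff_map_fun_eq_infinitePi_map (by fun_prop)).1 hσ,
    Measure.infinitePi_map_piCurry (fun i j ↦ P.map (X i j))]
  congrm Measure.infinitePi fun i ↦ ?_
  rw [(iIndepFun_iff_map_fun_eq_infinitePi_map (by fun_prop)).1 (hrow i)]

variable [IsProbabilityMeasure P]

lemma mgf_indicator_one_le {E : Set Ω} (hE : MeasurableSet E) (l : ℝ) :
    mgf (E.indicator 1) P l ≤ exp ((exp l - 1) * P.real E) := by
  have hexp : (fun ω ↦ exp (l * E.indicator 1 ω))
      = fun ω ↦ E.indicator (fun _ ↦ exp l - 1) ω + 1 := by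
    ext ω; by_cases hω : ω ∈ E <;> simp [hω]
  rw [mgf, hexp, integral_add ((integrable_const _).indicator hE) (integrable_const 1),
    integral_indicator_const _ hE]
  simpa [mul_comm, add_comm] using add_one_le_exp ((exp l - 1) * P.real E)

open scoped Classical in
lemma measureReal_card_ge_le_exp {κ β : Type*} [Fintype κ] [MeasurableSpace β]
    {Y : κ → Ω → β} (hY : iIndepFun Y P) (mY : ∀ j, Measurable (Y j))
    {S : Set β} (hS : MeasurableSet S) {l : ℝ} (hl : 0 ≤ l) (a : ℝ) :
    P.real {ω | a ≤ #{j | Y j ω ∈ S}}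
      ≤ exp (-l * a + (exp l - 1) * ∑ j, P.real (Y j ⁻¹' S)) := by
  set χ : κ → Ω → ℝ := fun j ↦ (Y j ⁻¹' S).indicator 1
  have mχ (j : κ) : Measurable (χ j) := measurable_const.indicator (mY j hS)
  have hχ : iIndepFun χ P :=
    hY.comp (fun _ ↦ S.indicator 1) fun _ ↦ measurable_const.indicator hS
  have hcard : ∀ ω, (#{j | Y j ω ∈ S} : ℝ) = (∑ j, χ j) ω := fun ω ↦ by
    simp [χ, Set.indicator_apply, sum_boole]
  simp_rw [hcard]
  refine (measure_ge_le_exp_mul_mgf a hl (hχ.integrable_exp_mul_sum mχ fun j _ ↦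
    integrable_exp_mul_of_le l 1 hl (mχ j).aemeasurable
      (ae_of_all _ fun ω ↦ Set.indicator_le_self' (fun _ _ ↦ zero_le_one) ω))).trans ?_
  rw [hχ.mgf_sum mχ, exp_add, mul_sum, exp_sum]
  gcongr
  · exact fun j _ ↦ mgf_nonneg
  · exact mgf_indicator_one_le (mY _ hS) l

lemma mgf_natCast_le {N : Ω → ℕ} (hN : Measurable N) {n : ℕ} (hNn : ∀ ω, N ω ≤ n) {l : ℝ}
    (hl : 0 ≤ l) :
    mgf (fun ω ↦ (N ω : ℝ)) P l
      ≤ 1 + ∑ m ∈ range n, exp (l * (m + 1)) * P.real {ω | m + 1 ≤ N ω} := by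
  set E : ℕ → Set Ω := fun m ↦ {ω | m + 1 ≤ N ω}
  have hE (m : ℕ) : MeasurableSet (E m) := hN measurableSet_Ici
  have hpt (ω : Ω) :
      exp (l * N ω) ≤ 1 + ∑ m ∈ range n, (E m).indicator (fun _ ↦ exp (l * (m + 1))) ω := by
    have hterm (m : ℕ) : 0 ≤ (E m).indicator (fun _ ↦ exp (l * (m + 1))) ω :=
      Set.indicator_nonneg (fun _ _ ↦ (exp_pos _).le) _
    cases hk : N ω with
    | zero => simpa using sum_nonneg fun m (_ : m ∈ range n) ↦ hterm m
    | succ k =>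
      have hkn : k ∈ range n := mem_range.2 (by have := hNn ω; omega)
      calc exp (l * (k + 1 : ℕ)) = (E k).indicator (fun _ ↦ exp (l * (k + 1))) ω := by
            simp [E, hk]
        _ ≤ ∑ m ∈ range n, (E m).indicator (fun _ ↦ exp (l * (m + 1))) ω :=
            single_le_sum (fun m _ ↦ hterm m) hkn
        _ ≤ _ := le_add_of_nonneg_left zero_le_one
  have hint (m : ℕ) : Integrable ((E m).indicator fun _ ↦ exp (l * (m + 1))) P :=
    (integrable_const _).indicator (hE m)
  calc mgf (fun ω ↦ (N ω : ℝ)) P l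
      ≤ ∫ ω, (1 + ∑ m ∈ range n, (E m).indicator (fun _ ↦ exp (l * (m + 1))) ω) ∂P :=
        integral_mono (integrable_exp_mul_of_le l n hl (by fun_prop)
          (ae_of_all _ fun ω ↦ by exact_mod_cast hNn ω))
          ((integrable_const 1).add (integrable_finsetSum _ fun m _ ↦ hint m)) hpt
    _ = _ := by
        rw [integral_add (integrable_const 1) (integrable_finsetSum _ fun m _ ↦ hint m),
          integral_finsetSum _ fun m _ ↦ hint m]
        simp only [integral_indicator_const _ (hE _), integral_const, probReal_univ, smul_eq_mul,
          one_mul, mul_comm, E]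

lemma ofReal_one_sub_le_measure {s t : Set Ω} {p : ℝ} (hp : 0 ≤ p)
    (hst : ∀ᵐ ω ∂P, ω ∈ t ∨ ω ∈ s) (ht : P t ≤ ENNReal.ofReal p) :
    ENNReal.ofReal (1 - p) ≤ P s := by
  have h1 : 1 ≤ P t + P s :=
    calc 1 = P Set.univ := measure_univ.symm
      _ ≤ P (t ∪ s) := measure_mono_ae (hst.mono fun _ h _ ↦ h)
      _ ≤ P t + P s := measure_union_le _ _
  rw [ENNReal.ofReal_sub _ hp, ENNReal.ofReal_one]
  exact tsub_le_iff_left.2 (h1.trans (add_le_add_left ht _))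

end Probability

lemma sum_sq_colZero {n : ℕ} (A : Matrix (Fin n) (Fin n) ℝ) (J : Finset (Fin n)) (i : Fin n) :
    ∑ j, colZero A J i j ^ 2 = ∑ j ∈ Jᶜ, A i j ^ 2 := by
  rw [← sum_add_sum_compl J, sum_eq_zero fun j hj ↦ by simp [colZero, hj], zero_add]
  exact sum_congr rfl fun j hj ↦ by simp [colZero, mem_compl.1 hj]

lemma norm2toInf_colZero_le {n : ℕ} (A : Matrix (Fin n) (Fin n) ℝ) (J : Finset (Fin n)) {R : ℝ}
    (h : ∀ i, ∑ j ∈ Jᶜ, A i j ^ 2 ≤ R) : norm2toInf (colZero A J) ≤ √R :=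
  Real.iSup_le (fun i ↦ sqrt_le_sqrt ((sum_sq_colZero A J i).trans_le (h i))) (sqrt_nonneg R)

lemma norm2toInf_colZero_empty_le {n : ℕ} (A : Matrix (Fin n) (Fin n) ℝ) {a : ℝ}
    (hA : ∀ i j, A i j ^ 2 ≤ a) : norm2toInf (colZero A ∅) ≤ √(n * a) :=
  norm2toInf_colZero_le A ∅ fun i ↦ by simpa using sum_le_sum fun j (_ : j ∈ univ) ↦ hA i j

namespace ColumnRemoval

variable {κ : Type*} [Fintype κ]

def level (K : ℝ) (t : ℕ) : ℝ := K * 2 ^ t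

noncomputable def numAbove (K : ℝ) (t : ℕ) (x : κ → ℝ) : ℕ := #{j | level K t < x j ^ 2}

open scoped Classical in
noncomputable def removedCols (K : ℝ) (c : ℕ → ℝ) (T : ℕ) (x : κ → ℝ) : Finset κ :=
  {j | ∃ t ≤ T, c t < numAbove K t x ∧ level K t < x j ^ 2}

noncomputable def overflow (K : ℝ) (c : ℕ → ℝ) (T : ℕ) (x : κ → ℝ) : ℕ :=
  (range (T + 1)).sup' nonempty_range_add_one fun t ↦
    if c t < numAbove K t x then numAbove K t x else 0

section Deterministic

variable {K : ℝ} {c : ℕ → ℝ} {T : ℕ} {x : κ → ℝ}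

@[simp]
lemma mem_removedCols {j : κ} :
    j ∈ removedCols K c T x ↔ ∃ t ≤ T, c t < numAbove K t x ∧ level K t < x j ^ 2 := by
  simp [removedCols]

lemma level_nonneg (hK : 0 ≤ K) (t : ℕ) : 0 ≤ level K t := by
  unfold level; positivity

lemma level_mono (hK : 0 ≤ K) : Monotone (level K) := fun _ _ h ↦
  mul_le_mul_of_nonneg_left (pow_le_pow_right₀ one_le_two h) hK

lemma sum_range_level (K : ℝ) (T : ℕ) : ∑ t ∈ range T, level K t = K * (2 ^ T - 1) := by
  simp only [level, ← mul_sum, geom_sum_eq (by norm_num : (2 : ℝ) ≠ 1)]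
  ring

lemma numAbove_le_card (K : ℝ) (t : ℕ) (x : κ → ℝ) : numAbove K t x ≤ Fintype.card κ :=
  card_filter_le _ _

lemma overflow_le_card : overflow K c T x ≤ Fintype.card κ :=
  sup'_le _ _ fun t _ ↦ by split_ifs <;> simp [numAbove_le_card]

lemma card_removedCols_le_overflow (hK : 0 ≤ K) : #(removedCols K c T x) ≤ overflow K c T x := by
  classical
  by_cases hbad : ∃ t ≤ T, c t < numAbove K t x
  · let s := Nat.find hbad
    obtain ⟨hsT, hs⟩ : s ≤ T ∧ c s < numAbove K s x := Nat.find_spec hbad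
    have hsub : removedCols K c T x ⊆ ({j | level K s < x j ^ 2} : Finset κ) := fun j hj ↦ by
      obtain ⟨t, htT, hct, hlt⟩ := mem_removedCols.1 hj
      exact mem_filter.2 ⟨mem_univ j,
        (level_mono hK (Nat.find_min' hbad ⟨htT, hct⟩)).trans_lt hlt⟩
    calc #(removedCols K c T x) ≤ numAbove K s x := card_le_card hsub
      _ = if c s < numAbove K s x then numAbove K s x else 0 := (if_pos hs).symm
      _ ≤ overflow K c T x := le_sup' (fun t ↦ if c t < numAbove K t x then numAbove K t x else 0)
        (mem_range_succ_iff.2 hsT)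
  · push Not at hbad
    have : removedCols K c T x = ∅ := eq_empty_of_forall_notMem fun j hj ↦ by
      obtain ⟨t, htT, hct, -⟩ := mem_removedCols.1 hj
      exact (hbad t htT).not_gt hct
    simp [this]

lemma sum_level_lt_le_two_mul (hK : 0 ≤ K) (T : ℕ) {y : ℝ} (hy : 0 ≤ y) :
    ∑ t ∈ range (T + 1) with level K t < y, level K t ≤ 2 * y := by
  set S := {t ∈ range (T + 1) | level K t < y}
  rcases S.eq_empty_or_nonempty with hS | hS
  · simp [hS, hy]
  have hm : level K (S.max' hS) < y := (mem_filter.1 (S.max'_mem hS)).2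
  calc ∑ t ∈ S, level K t ≤ ∑ t ∈ range (S.max' hS + 1), level K t :=
        sum_le_sum_of_subset_of_nonneg (fun t ht ↦ mem_range_succ_iff.2 (S.le_max' t ht))
          fun t _ _ ↦ level_nonneg hK t
    _ = K * (2 ^ (S.max' hS + 1) - 1) := sum_range_level K _
    _ ≤ 2 * level K (S.max' hS) := by rw [level, pow_succ]; linarith
    _ ≤ 2 * y := by linarith

lemma le_add_sum_level_lt (hK : 0 ≤ K) {y : ℝ} (hyT : y ≤ level K T) :
    y ≤ K + ∑ t ∈ range (T + 1) with level K t < y, level K t := by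
  classical
  have hex : ∃ s, y ≤ level K s := ⟨T, hyT⟩
  have hsT : Nat.find hex ≤ T := Nat.find_min' hex hyT
  have hsub : range (Nat.find hex) ⊆ {t ∈ range (T + 1) | level K t < y} := fun t ht ↦
    mem_filter.2 ⟨mem_range.2 (by grind), not_le.1 (Nat.find_min hex (mem_range.1 ht))⟩
  calc y ≤ level K (Nat.find hex) := Nat.find_spec hex
    _ = K + ∑ t ∈ range (Nat.find hex), level K t := by rw [sum_range_level, level]; ring
    _ ≤ _ := by
      grw [sum_le_sum_of_subset_of_nonneg hsub fun t _ _ ↦ level_nonneg hK t]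

lemma card_filter_compl_removedCols_le [DecidableEq κ] {t : ℕ} (ht : t ≤ T) (hc : 0 ≤ c t) :
    (#{j ∈ (removedCols K c T x)ᶜ | level K t < x j ^ 2} : ℝ) ≤ c t := by
  by_cases hbad : c t < numAbove K t x
  · have : {j ∈ (removedCols K c T x)ᶜ | level K t < x j ^ 2} = ∅ :=
      filter_eq_empty_iff.2 fun j hj hlt ↦
        (mem_compl.1 hj) (mem_removedCols.2 ⟨t, ht, hbad, hlt⟩)
    simpa [this] using hc
  · refine le_trans ?_ (not_lt.1 hbad)
    exact_mod_cast card_le_card (filter_subset_filter _ (subset_univ _))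

lemma sum_sq_compl_removedCols_le [DecidableEq κ] (hK : 0 ≤ K) (hc : ∀ t, 0 ≤ c t)
    (hx : ∀ j, x j ^ 2 ≤ level K T) :
    ∑ j ∈ (removedCols K c T x)ᶜ, x j ^ 2
      ≤ K * Fintype.card κ + ∑ t ∈ range (T + 1), level K t * c t := by
  set R := removedCols K c T x
  calc ∑ j ∈ Rᶜ, x j ^ 2
      ≤ ∑ j ∈ Rᶜ, (K + ∑ t ∈ range (T + 1) with level K t < x j ^ 2, level K t) :=
        sum_le_sum fun j _ ↦ le_add_sum_level_lt hK (hx j)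
    _ = K * #Rᶜ + ∑ t ∈ range (T + 1), level K t * #{j ∈ Rᶜ | level K t < x j ^ 2} := by
        simp_rw [sum_add_distrib, sum_filter]
        rw [sum_comm]
        simp [← sum_filter, mul_comm]
    _ ≤ K * Fintype.card κ + ∑ t ∈ range (T + 1), level K t * c t := by
        gcongr with t ht
        · exact card_le_univ _
        · exact level_nonneg hK t
        · exact card_filter_compl_removedCols_le (mem_range_succ_iff.1 ht) (hc t)

lemma sum_range_two_pow_mul_sub (T : ℕ) :
    ∑ t ∈ range (T + 1), 2 ^ t * (T - t) + T + 2 = 2 ^ (T + 1) := by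
  induction T with
  | zero => simp
  | succ T ih =>
    rw [sum_range_succ']
    simp_rw [Nat.add_sub_add_right, pow_succ, mul_right_comm _ 2, ← sum_mul]
    omega

noncomputable def threshold (K : ℝ) (T : ℕ) (μ : ℕ → ℝ) (t : ℕ) : ℝ :=
  exp 5 * μ t + 4 * K + (T - t : ℕ)

lemma threshold_nonneg {μ : ℕ → ℝ} (hK : 0 ≤ K) (hμ : ∀ t, 0 ≤ μ t) (t : ℕ) :
    0 ≤ threshold K T μ t := by
  unfold threshold; have := hμ t; positivity

lemma sum_level_mul_threshold_le {μ : ℕ → ℝ} {N : ℝ} (hK : exp 5 ≤ K)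
    (hT : K * 2 ^ (T + 1) ≤ N) (hμ0 : ∀ t, 0 ≤ μ t)
    (hμ : ∑ t ∈ range (T + 1), level K t * μ t ≤ 2 * N) :
    ∑ t ∈ range (T + 1), level K t * threshold K T μ t ≤ 7 * K * N := by
  have hK1 : 1 ≤ K := (one_le_exp (by norm_num)).trans hK
  have hN : 0 ≤ N := le_trans (by positivity) hT
  have hgeom : ∑ t ∈ range (T + 1), (2 : ℝ) ^ t * (T - t : ℕ) ≤ 2 ^ (T + 1) := by
    have := sum_range_two_pow_mul_sub T
    exact_mod_cast (by omega : ∑ t ∈ range (T + 1), 2 ^ t * (T - t) ≤ 2 ^ (T + 1))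
  have hsplit : ∑ t ∈ range (T + 1), level K t * threshold K T μ t
      = exp 5 * ∑ t ∈ range (T + 1), level K t * μ t + 4 * K * ∑ t ∈ range (T + 1), level K t
        + K * ∑ t ∈ range (T + 1), (2 : ℝ) ^ t * (T - t : ℕ) := by
    simp only [mul_sum, ← sum_add_distrib, threshold, level]
    exact sum_congr rfl fun t _ ↦ by ring
  rw [hsplit, sum_range_level]
  have h1 : exp 5 * ∑ t ∈ range (T + 1), level K t * μ t ≤ K * (2 * N) :=
    mul_le_mul hK hμ (sum_nonneg fun t _ ↦ mul_nonneg (level_nonneg (by linarith) t) (hμ0 t))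
      (by linarith)
  nlinarith

lemma exists_level_bracket {N : ℝ} (hK : 0 < K) (hN : 4 * K < N) :
    ∃ T : ℕ, N / 4 ≤ level K T ∧ K * 2 ^ (T + 1) ≤ N := by
  obtain ⟨T, hT, hTN⟩ := exists_nat_pow_near (x := N / (2 * K)) (y := (2 : ℝ))
    (by rw [le_div_iff₀ (by positivity)]; linarith) one_lt_two
  rw [le_div_iff₀ (by positivity)] at hT
  rw [div_lt_iff₀ (by positivity), pow_succ] at hTN
  exact ⟨T, by rw [level]; linarith, by rw [pow_succ]; linarith⟩

lemma exists_card_le_norm2toInf_colZero_le {n : ℕ} {K R b : ℝ} {T : ℕ} (hK : 0 ≤ K)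
    (A : Matrix (Fin n) (Fin n) ℝ) (c : Fin n → ℕ → ℝ) (hc : ∀ i t, 0 ≤ c i t)
    (hA : ∀ i j, A i j ^ 2 ≤ level K T) (hR : ∀ i, ∑ t ∈ range (T + 1), level K t * c i t ≤ R)
    (hb : ∑ i, (overflow K (c i) T (A i) : ℝ) ≤ b) :
    ∃ J : Finset (Fin n), (#J : ℝ) ≤ b ∧ norm2toInf (colZero A J) ≤ √(K * n + R) := by
  set J := univ.biUnion fun i ↦ removedCols K (c i) T (A i)
  refine ⟨J, ?_, norm2toInf_colZero_le A J fun i ↦ ?_⟩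
  · calc (#J : ℝ) ≤ ∑ i, (#(removedCols K (c i) T (A i)) : ℝ) := by exact_mod_cast card_biUnion_le
      _ ≤ ∑ i, (overflow K (c i) T (A i) : ℝ) := by
          gcongr with i; exact_mod_cast card_removedCols_le_overflow hK
      _ ≤ b := hb
  · calc ∑ j ∈ Jᶜ, A i j ^ 2 ≤ ∑ j ∈ (removedCols K (c i) T (A i))ᶜ, A i j ^ 2 :=
          sum_le_sum_of_subset_of_nonneg (compl_subset_compl.2 (subset_biUnion_of_mem
            (fun i ↦ removedCols K (c i) T (A i)) (mem_univ i))) fun _ _ _ ↦ sq_nonneg _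
      _ ≤ K * Fintype.card (Fin n) + ∑ t ∈ range (T + 1), level K t * c i t :=
          sum_sq_compl_removedCols_le hK (hc i) (hA i)
      _ ≤ K * n + R := by rw [Fintype.card_fin]; linarith [hR i]

end Deterministic

section Random

variable {Ω : Type*} [MeasurableSpace Ω] {P : Measure Ω} {K : ℝ}

lemma measurable_numAbove (K : ℝ) (t : ℕ) : Measurable (numAbove (κ := κ) K t) := by
  have : numAbove (κ := κ) K t = fun x ↦ ∑ j, if level K t < x j ^ 2 then 1 else 0 :=
    funext fun x ↦ card_filter _ _
  rw [this]
  exact Finset.measurable_sum _ fun j _ ↦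
    Measurable.ite (measurableSet_lt measurable_const (by fun_prop)) measurable_const
      measurable_const

lemma measurable_overflow (K : ℝ) (c : ℕ → ℝ) (T : ℕ) :
    Measurable (overflow (κ := κ) K c T) :=
  Finset.measurable_range_sup'' fun t _ ↦
    Measurable.ite (measurable_numAbove K t (MeasurableSet.of_discrete (s := {k : ℕ | c t < k})))
      (measurable_numAbove K t) measurable_const

noncomputable def meanNumAbove (P : Measure Ω) (K : ℝ) (Y : κ → Ω → ℝ) (t : ℕ) : ℝ :=
  ∑ j, P.real {ω | level K t < Y j ω ^ 2}

lemma meanNumAbove_nonneg (Y : κ → Ω → ℝ) (t : ℕ) : 0 ≤ meanNumAbove P K Y t :=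
  sum_nonneg fun _ _ ↦ measureReal_nonneg

variable [IsProbabilityMeasure P]

lemma sum_level_mul_measureReal_le (hK : 0 ≤ K) (T : ℕ) {Y : Ω → ℝ} (hY : Measurable Y)
    (hY2 : Integrable (fun ω ↦ Y ω ^ 2) P) :
    ∑ t ∈ range (T + 1), level K t * P.real {ω | level K t < Y ω ^ 2} ≤ 2 * ∫ ω, Y ω ^ 2 ∂P := by
  set E : ℕ → Set Ω := fun t ↦ {ω | level K t < Y ω ^ 2}
  have hE (t : ℕ) : MeasurableSet (E t) := measurableSet_lt measurable_const (by fun_prop)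
  have hint (t : ℕ) : Integrable ((E t).indicator fun _ ↦ level K t) P :=
    (integrable_const _).indicator (hE t)
  have hpt (ω : Ω) : ∑ t ∈ range (T + 1), (E t).indicator (fun _ ↦ level K t) ω ≤ 2 * Y ω ^ 2 := by
    simpa only [Set.indicator_apply, ← sum_filter, E, Set.mem_ofPred_eq] using
      sum_level_lt_le_two_mul hK T (sq_nonneg (Y ω))
  calc ∑ t ∈ range (T + 1), level K t * P.real (E t)
      = ∫ ω, ∑ t ∈ range (T + 1), (E t).indicator (fun _ ↦ level K t) ω ∂P := by
        rw [integral_finsetSum _ fun t _ ↦ hint t]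
        simp [integral_indicator_const _ (hE _), mul_comm]
    _ ≤ ∫ ω, 2 * Y ω ^ 2 ∂P :=
        integral_mono (integrable_finsetSum _ fun t _ ↦ hint t) (hY2.const_mul 2) hpt
    _ = 2 * ∫ ω, Y ω ^ 2 ∂P := integral_const_mul _ _

variable {Y : κ → Ω → ℝ}

lemma measureReal_numAbove_ge_le (hY : iIndepFun Y P) (mY : ∀ j, Measurable (Y j)) (t : ℕ)
    {a : ℝ} (ha : exp 5 * meanNumAbove P K Y t ≤ a) :
    P.real {ω | a ≤ numAbove K t (Y · ω)} ≤ exp (-4 * a) := by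
  have hS : MeasurableSet {y : ℝ | level K t < y ^ 2} :=
    measurableSet_lt measurable_const (by fun_prop)
  have hμ := meanNumAbove_nonneg (P := P) (K := K) Y t
  calc P.real {ω | a ≤ numAbove K t (Y · ω)}
      = P.real {ω | a ≤ #{j | Y j ω ∈ {y : ℝ | level K t < y ^ 2}}} := by
        simp only [numAbove, Set.mem_ofPred_eq]
    _ ≤ exp (-5 * a + (exp 5 - 1) * meanNumAbove P K Y t) :=
        measureReal_card_ge_le_exp hY mY hS (by norm_num) a
    _ ≤ exp (-4 * a) := exp_le_exp.2 (by linarith)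

lemma measureReal_overflow_ge_le (hK : 0 ≤ K) (hY : iIndepFun Y P) (mY : ∀ j, Measurable (Y j))
    (T : ℕ) {m : ℕ} (hm : 1 ≤ m) :
    P.real {ω | m ≤ overflow K (threshold K T (meanNumAbove P K Y)) T (Y · ω)}
      ≤ 2 * exp (-3 * m - 4 * K) := by
  set c := threshold K T (meanNumAbove P K Y)
  have hsub : {ω | m ≤ overflow K c T (Y · ω)}
      ⊆ ⋃ t ∈ range (T + 1), {ω | max (c t) m ≤ numAbove K t (Y · ω)} := fun ω hω ↦ by
    obtain ⟨t, ht, hsup⟩ := exists_mem_eq_sup' nonempty_range_add_one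
      fun t ↦ if c t < numAbove K t (Y · ω) then numAbove K t (Y · ω) else 0
    have hmt : m ≤ if c t < numAbove K t (Y · ω) then numAbove K t (Y · ω) else 0 :=
      hsup ▸ hω
    split_ifs at hmt with hbad
    · exact Set.mem_biUnion ht (max_le hbad.le (by exact_mod_cast hmt))
    · omega
  have htail (t : ℕ) : P.real {ω | max (c t) m ≤ numAbove K t (Y · ω)}
      ≤ exp (-3 * m - 4 * K) * exp (-(T - t : ℕ)) := by
    have hμ := meanNumAbove_nonneg (P := P) (K := K) Y t
    have hc : exp 5 * meanNumAbove P K Y t + 4 * K + (T - t : ℕ) = c t := rfl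
    rw [← exp_add]
    refine (measureReal_numAbove_ge_le hY mY t ?_).trans (exp_le_exp.2 ?_)
    · exact le_max_of_le_left (by rw [← hc]; linarith [(T - t : ℕ).cast_nonneg (α := ℝ)])
    · linarith [le_max_left (c t) m, le_max_right (c t) m, mul_nonneg (exp_pos 5).le hμ]
  calc P.real {ω | m ≤ overflow K c T (Y · ω)}
      ≤ ∑ t ∈ range (T + 1), P.real {ω | max (c t) m ≤ numAbove K t (Y · ω)} :=
        (measureReal_mono hsub (measure_ne_top _ _)).trans (measureReal_biUnion_finset_le _ _)
    _ ≤ exp (-3 * m - 4 * K) * ∑ t ∈ range (T + 1), exp (-(T - t : ℕ)) := by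
        rw [mul_sum]; exact sum_le_sum fun t _ ↦ htail t
    _ ≤ exp (-3 * m - 4 * K) * 2 := by
        gcongr
        simpa using (sum_range_reflect (fun s : ℕ ↦ exp (-(s : ℝ))) (T + 1)).trans_le
          (sum_range_exp_neg_le_two (T + 1))
    _ = 2 * exp (-3 * m - 4 * K) := mul_comm _ _

lemma mgf_overflow_le (hK : 0 ≤ K) (hY : iIndepFun Y P) (mY : ∀ j, Measurable (Y j)) (T : ℕ) :
    mgf (fun ω ↦ (overflow K (threshold K T (meanNumAbove P K Y)) T (Y · ω) : ℝ)) P 2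
      ≤ 1 + 4 * exp (-4 * K) := by
  set c := threshold K T (meanNumAbove P K Y)
  have hN : Measurable fun ω ↦ overflow K c T (Y · ω) :=
    (measurable_overflow K c T).comp (measurable_pi_lambda _ mY)
  refine (mgf_natCast_le hN (fun _ ↦ overflow_le_card) zero_le_two).trans (add_le_add_right ?_ 1)
  calc ∑ m ∈ range (Fintype.card κ), exp (2 * (m + 1)) * P.real {ω | m + 1 ≤ overflow K c T (Y · ω)}
      ≤ ∑ m ∈ range (Fintype.card κ), exp (2 * (m + 1)) * (2 * exp (-3 * (m + 1 : ℕ) - 4 * K)) := by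
        gcongr with m
        exact measureReal_overflow_ge_le hK hY mY T (Nat.le_add_left 1 m)
    _ = 2 * exp (-4 * K) * ∑ m ∈ range (Fintype.card κ), exp (-(m + 1 : ℝ)) := by
        rw [mul_sum]
        refine sum_congr rfl fun m _ ↦ ?_
        rw [mul_assoc, ← exp_add, mul_left_comm, ← exp_add]
        push_cast; ring_nf
    _ ≤ 2 * exp (-4 * K) * 2 := by
        gcongr
        exact (sum_le_sum fun m _ ↦ exp_le_exp.2 (by linarith)).trans (sum_range_exp_neg_le_two _)
    _ = 4 * exp (-4 * K) := by ring

lemma measureReal_sum_overflow_ge_le {ι : Type*} [Fintype ι] (hK : 0 ≤ K)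
    {X : ι → κ → Ω → ℝ} (mX : ∀ i j, Measurable (X i j))
    (hX : iIndepFun (fun p : ι × κ ↦ X p.1 p.2) P) (T : ℕ) (b : ℝ) :
    P.real {ω | b ≤ ∑ i, (overflow K (threshold K T (meanNumAbove P K (X i))) T (X i · ω) : ℝ)}
      ≤ exp (-2 * b) * (1 + 4 * exp (-4 * K)) ^ Fintype.card ι := by
  set g : ι → (κ → ℝ) → ℝ := fun i x ↦ overflow K (threshold K T (meanNumAbove P K (X i))) T x
  set F : ι → Ω → ℝ := fun i ω ↦ g i (X i · ω)
  have mg (i : ι) : Measurable (g i) := measurable_from_nat.comp (measurable_overflow _ _ T)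
  have mF (i : ι) : Measurable (F i) := (mg i).comp (measurable_pi_lambda _ (mX i))
  have hF : iIndepFun F P := (hX.curry mX).comp g mg
  have hrow (i : ι) : iIndepFun (X i) P :=
    hX.precomp (g := fun j ↦ (i, j)) fun _ _ h ↦ (Prod.mk.inj h).2
  have hint (i : ι) (_ : i ∈ univ) : Integrable (fun ω ↦ exp (2 * F i ω)) P :=
    integrable_exp_mul_of_le 2 (Fintype.card κ) zero_le_two (mF i).aemeasurable
      (ae_of_all _ fun ω ↦ Nat.cast_le.2 overflow_le_card)
  calc P.real {ω | b ≤ ∑ i, F i ω} = P.real {ω | b ≤ (∑ i, F i) ω} := by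
        simp only [Finset.sum_apply]
    _ ≤ exp (-2 * b) * mgf (∑ i, F i) P 2 :=
        measure_ge_le_exp_mul_mgf b zero_le_two (hF.integrable_exp_mul_sum mF hint)
    _ = exp (-2 * b) * ∏ i, mgf (F i) P 2 := by rw [hF.mgf_sum mF]
    _ ≤ exp (-2 * b) * ∏ _i : ι, (1 + 4 * exp (-4 * K)) := by
        gcongr with i
        · exact fun _ _ ↦ mgf_nonneg
        · exact mgf_overflow_le hK (hrow i) (mX i) T
    _ = exp (-2 * b) * (1 + 4 * exp (-4 * K)) ^ Fintype.card ι := by rw [prod_const, card_univ]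

lemma sum_level_mul_threshold_meanNumAbove_le (hK : exp 5 ≤ K) {T : ℕ}
    (hT : K * 2 ^ (T + 1) ≤ Fintype.card κ) (mY : ∀ j, Measurable (Y j))
    (hY2 : ∀ j, Integrable (fun ω ↦ Y j ω ^ 2) P) (hvar : ∀ j, ∫ ω, Y j ω ^ 2 ∂P ≤ 1) :
    ∑ t ∈ range (T + 1), level K t * threshold K T (meanNumAbove P K Y) t
      ≤ 7 * K * Fintype.card κ := by
  have hK0 : 0 ≤ K := (exp_pos 5).le.trans hK
  refine sum_level_mul_threshold_le hK hT (meanNumAbove_nonneg Y) ?_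
  calc ∑ t ∈ range (T + 1), level K t * meanNumAbove P K Y t
      = ∑ j, ∑ t ∈ range (T + 1), level K t * P.real {ω | level K t < Y j ω ^ 2} := by
        simp only [meanNumAbove, mul_sum]; exact sum_comm
    _ ≤ ∑ _j : κ, (2 : ℝ) := sum_le_sum fun j _ ↦
        (sum_level_mul_measureReal_le hK0 T (mY j) (hY2 j)).trans (by linarith [hvar j])
    _ = 2 * Fintype.card κ := by simp [mul_comm]

end Random

section RandomMatrix

variable {Ω : Type*} [MeasurableSpace Ω] {P : Measure Ω} [IsProbabilityMeasure P] {n : ℕ}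
  {A : Ω → Matrix (Fin n) (Fin n) ℝ}

theorem ofReal_le_measure_exists_colZero {K b : ℝ} (hK : exp 5 ≤ K) (hb : 0 ≤ b)
    (mA : ∀ i j, Measurable fun ω ↦ A ω i j)
    (hA : iIndepFun (fun p : Fin n × Fin n ↦ fun ω ↦ A ω p.1 p.2) P)
    (hA2 : ∀ i j, Integrable (fun ω ↦ A ω i j ^ 2) P) (hvar : ∀ i j, ∫ ω, A ω i j ^ 2 ∂P ≤ 1)
    (hsq : ∀ᵐ ω ∂P, ∀ i j, A ω i j ^ 2 ≤ n / 4) :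
    ENNReal.ofReal (1 - exp (-2 * b) * (1 + 4 * exp (-4 * K)) ^ n)
      ≤ P {ω | ∃ J : Finset (Fin n), (#J : ℝ) ≤ b ∧
          norm2toInf (colZero (A ω) J) ≤ √(8 * K * n)} := by
  have hK0 : 0 < K := (exp_pos 5).trans_le hK
  have hp : 0 ≤ exp (-2 * b) * (1 + 4 * exp (-4 * K)) ^ n := by positivity
  by_cases hn : (n : ℝ) ≤ 4 * K
  · refine ofReal_one_sub_le_measure (t := ∅) hp ?_ (by simp)
    filter_upwards [hsq] with ω hω
    exact .inr ⟨∅, by simpa using hb, (norm2toInf_colZero_empty_le (A ω) hω).trans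
      (sqrt_le_sqrt (by nlinarith [(n.cast_nonneg : (0 : ℝ) ≤ n)]))⟩
  obtain ⟨T, hlevel, hKT⟩ := exists_level_bracket hK0 (not_le.1 hn)
  set c : Fin n → ℕ → ℝ := fun i ↦ threshold K T (meanNumAbove P K fun j ω ↦ A ω i j)
  refine ofReal_one_sub_le_measure (t := {ω | b ≤ ∑ i, (overflow K (c i) T (A ω i) : ℝ)}) hp
    ?_ ?_
  · filter_upwards [hsq] with ω hω
    refine or_iff_not_imp_left.2 fun hgood ↦ ?_
    obtain ⟨J, hJ, hJnorm⟩ := exists_card_le_norm2toInf_colZero_le hK0.le (A ω) c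
      (fun i ↦ threshold_nonneg hK0.le (meanNumAbove_nonneg _)) (fun i j ↦ (hω i j).trans hlevel)
      (fun i ↦ sum_level_mul_threshold_meanNumAbove_le hK (by simpa using hKT) (mA i) (hA2 i)
        (hvar i)) (not_le.1 hgood).le
    exact ⟨J, hJ, hJnorm.trans_eq (by simp only [Fintype.card_fin]; ring_nf)⟩
  · rw [← ofReal_measureReal]
    exact ENNReal.ofReal_le_ofReal (by
      simpa using measureReal_sum_overflow_ge_le hK0.le (X := fun i j ω ↦ A ω i j) mA hA T b)

end RandomMatrix

end ColumnRemoval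

/-- **Bounding the `2 → ∞` norm by removing a few columns.** There is an absolute constant `C`
such that: if `A` is an `n × n` random matrix with i.i.d. entries of mean zero, variance at
most one, and `|A_{ij}| ≤ √n/2` a.s., and `ε ∈ (0,1/2]`, then with probability at least
`1 - exp(-εn)` there is `J ⊆ [n]`, `|J| ≤ εn`, with `‖A_{Jᶜ}‖_{2→∞} ≤ C √(ln ε⁻¹) √n`. -/
theorem two_to_infty_norm_column_removal :
    ∃ C : ℝ, 0 < C ∧
    ∀ (n : ℕ) (Ω : Type) (_ : MeasureSpace Ω) (_ : IsProbabilityMeasure (ℙ : Measure Ω))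
      (A : Ω → Matrix (Fin n) (Fin n) ℝ),
      (∀ i j, Measurable fun ω => A ω i j) →
      iIndepFun (fun p : Fin n × Fin n => fun ω => A ω p.1 p.2) ℙ →
      (∀ i j k l, IdentDistrib (fun ω => A ω i j) (fun ω => A ω k l) ℙ ℙ) →
      (∀ i j, MemLp (fun ω => A ω i j) 2 ℙ) →
      (∀ i j, ∫ ω, A ω i j ∂ℙ = 0) →
      (∀ i j, ∫ ω, (A ω i j) ^ 2 ∂ℙ ≤ 1) →
      (∀ i j, ∀ᵐ ω ∂ℙ, |A ω i j| ≤ Real.sqrt n / 2) →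
      ∀ ε : ℝ, 0 < ε → ε ≤ 1 / 2 →
      ENNReal.ofReal (1 - Real.exp (-(ε * n))) ≤
        ℙ {ω | ∃ J : Finset (Fin n), (J.card : ℝ) ≤ ε * n ∧
          norm2toInf (colZero (A ω) J) ≤ C * Real.sqrt (Real.log ε⁻¹) * Real.sqrt n} := by
  refine ⟨50, by norm_num, ?_⟩
  intro n Ω _ _ A mA hA _ hL2 _ hvar hbdd ε hε hε2
  set K := 300 * log ε⁻¹
  have hL : 0 ≤ log ε⁻¹ := log_nonneg ((one_le_inv₀ hε).2 (by linarith))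
  have hsq : ∀ᵐ ω ∂ℙ, ∀ i j, A ω i j ^ 2 ≤ n / 4 := by
    simp only [ae_all_iff]
    exact fun i j ↦ (hbdd i j).mono fun ω h ↦ by
      nlinarith [sq_abs (A ω i j), abs_nonneg (A ω i j), sq_sqrt (n.cast_nonneg : (0 : ℝ) ≤ n)]
  have hnorm : √(8 * K * n) ≤ 50 * √(log ε⁻¹) * √n :=
    calc √(8 * K * n) ≤ √(50 ^ 2 * log ε⁻¹ * n) :=
          sqrt_le_sqrt (by nlinarith [(n.cast_nonneg : (0 : ℝ) ≤ n)])
      _ = 50 * √(log ε⁻¹) * √n := by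
          rw [sqrt_mul (by positivity), sqrt_mul (by norm_num), sqrt_sq (by norm_num)]
  calc ENNReal.ofReal (1 - exp (-(ε * n)))
      ≤ ENNReal.ofReal (1 - exp (-2 * (ε * n)) * (1 + 4 * exp (-4 * K)) ^ n) :=
        ENNReal.ofReal_le_ofReal (sub_le_sub_left (exp_neg_two_mul_mul_one_add_pow_le
          (by positivity) (four_mul_exp_neg_mul_log_inv_le hε hε2) n) 1)
    _ ≤ ℙ {ω | ∃ J : Finset (Fin n), (#J : ℝ) ≤ ε * n ∧
          norm2toInf (colZero (A ω) J) ≤ √(8 * K * n)} :=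
        ColumnRemoval.ofReal_le_measure_exists_colZero (exp_five_le_mul_log_inv hε hε2)
          (by positivity) mA hA (fun i j ↦ (hL2 i j).integrable_sq) hvar hsq
    _ ≤ _ := measure_mono fun ω ⟨J, hJ, hJnorm⟩ ↦ (⟨J, hJ, hJnorm.trans hnorm⟩ : ∃ J, _)
end
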